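/- arXiv:2208.08971 — 9 statements merged into one kernel-verified Lean document; each statement's English description precedes it below -/
import Mathlib

section
/- Let A be the adjacency matrix of a finite simple graph G (a real symmetric 0–1 matrix) with spectral decomposition A = Σ_{r=0}^d θ_r E_r. If pretty good state transfer occurs from vertex a to vertex b, then a and b are strongly cospectral; that is, for every r there exists σ_r ∈ {1, −1} such that E_r e_a = σ_r E_r e_b (where e_a, e_b are the standard basis vectors of a and b). -/
open Matrix

/-! Since `exp (i t A) = ∑ r, exp (i t θ r) • E r`, pretty good state transfer forces
`1 ≤ ∑ r, |(E r) a b|`. Each `E r` is an orthogonal projection, so `(E r) a b` is the inner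
product of `E r e_a` and `E r e_b`, and Cauchy–Schwarz, once in each `r` and once over `r`, gives
`∑ r, |(E r) a b| ≤ ∑ r, √((E r) a a) * √((E r) b b) ≤ 1` because `∑ r, E r = 1`.
Equality in the second step forces `(E r) a a = (E r) b b`, and equality in the first then says
that `E r e_a` and `E r e_b` are parallel vectors of the same length. -/

namespace CompleteOrthogonalIdempotents

variable {𝔸 ι : Type*} [Ring 𝔸] [Fintype ι] {P : ι → 𝔸}

theorem pow_sum_smul {R : Type*} [CommSemiring R] [Algebra R 𝔸]
    (hP : CompleteOrthogonalIdempotents P) (c : ι → R) (k : ℕ) :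
    (∑ r, c r • P r) ^ k = ∑ r, c r ^ k • P r := by
  classical
  induction k with
  | zero => simp [hP.complete]
  | succ k ih =>
    simp_rw [pow_succ, ih, Finset.sum_mul_sum, smul_mul_smul_comm, hP.mul_eq, smul_ite,
      smul_zero, Finset.sum_ite_eq, Finset.mem_univ, if_true]

theorem exp_sum_smul [TopologicalSpace 𝔸] [IsTopologicalRing 𝔸] [T2Space 𝔸]
    [Algebra ℂ 𝔸] [ContinuousSMul ℂ 𝔸]
    (hP : CompleteOrthogonalIdempotents P) (c : ι → ℂ) :
    NormedSpace.exp (∑ r, c r • P r) = ∑ r, Complex.exp (c r) • P r := by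
  have hexp : ∀ r, HasSum (fun k : ℕ => ((k.factorial⁻¹ : ℂ) * c r ^ k) • P r)
      (Complex.exp (c r) • P r) := fun r => by
    rw [Complex.exp_eq_exp_ℂ]
    exact (NormedSpace.exp_series_hasSum_exp' (𝕂 := ℂ) (c r)).smul_const (P r)
  rw [NormedSpace.exp_eq_tsum ℂ]
  simp_rw [hP.pow_sum_smul, Finset.smul_sum, smul_smul]
  exact (hasSum_sum fun r _ => hexp r).tsum_eq

end CompleteOrthogonalIdempotents

namespace Matrix

variable {n : Type*} [Fintype n]

theorem abs_dotProduct_le (u v : n → ℝ) : |u ⬝ᵥ v| ≤ √(u ⬝ᵥ u) * √(v ⬝ᵥ v) := by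
  rw [← Real.sqrt_mul (by simpa using dotProduct_self_star_nonneg u)]
  apply Real.abs_le_sqrt
  simpa [dotProduct, sq] using Finset.sum_mul_sq_le_sq_mul_sq Finset.univ u v

theorem exists_sign_eq_smul_of_abs_dotProduct_eq {u v : n → ℝ}
    (hnorm : u ⬝ᵥ u = v ⬝ᵥ v) (h : |u ⬝ᵥ v| = u ⬝ᵥ u) :
    ∃ σ : ℝ, (σ = 1 ∨ σ = -1) ∧ u = σ • v := by
  obtain ⟨σ, hσ, huv⟩ : ∃ σ : ℝ, (σ = 1 ∨ σ = -1) ∧ u ⬝ᵥ v = σ * (u ⬝ᵥ u) := by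
    have hu : 0 ≤ u ⬝ᵥ u := by simpa only [star_trivial] using dotProduct_self_star_nonneg u
    rcases abs_eq_abs.1 (h.trans (abs_of_nonneg hu).symm) with h | h
    · exact ⟨1, Or.inl rfl, by rw [h, one_mul]⟩
    · exact ⟨-1, Or.inr rfl, by rw [h, neg_one_mul]⟩
  refine ⟨σ, hσ, sub_eq_zero.1 (dotProduct_self_eq_zero.1 ?_)⟩
  have hσ2 : σ * σ = 1 := by rcases hσ with rfl | rfl <;> norm_num
  simp only [sub_dotProduct, dotProduct_sub, smul_dotProduct, dotProduct_smul, smul_eq_mul,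
    dotProduct_comm v u, huv, ← hnorm]
  linear_combination -(u ⬝ᵥ u) * hσ2

end Matrix

namespace IsStarProjection

variable {n : Type*} [Fintype n] [DecidableEq n] {P : Matrix n n ℝ}

theorem mulVec_single_dotProduct_mulVec_single (hP : IsStarProjection P) (i j : n) :
    (P *ᵥ Pi.single i 1) ⬝ᵥ (P *ᵥ Pi.single j 1) = P i j := by
  have hsym : Pᵀ = P := (conjTranspose_eq_transpose_of_trivial P).symm.trans hP.isSelfAdjoint
  calc (P *ᵥ Pi.single i 1) ⬝ᵥ (P *ᵥ Pi.single j 1) = (Pᵀ * P) i j := by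
        simp [dotProduct, mul_apply]
    _ = P i j := by rw [hsym, hP.isIdempotentElem.eq]

theorem apply_self_nonneg (hP : IsStarProjection P) (i : n) : 0 ≤ P i i := by
  rw [← hP.mulVec_single_dotProduct_mulVec_single]
  simpa only [star_trivial] using dotProduct_self_star_nonneg (P *ᵥ Pi.single i 1)

theorem abs_apply_le_sqrt_mul_sqrt (hP : IsStarProjection P) (i j : n) :
    |P i j| ≤ √(P i i) * √(P j j) := by
  simp only [← hP.mulVec_single_dotProduct_mulVec_single]
  exact abs_dotProduct_le (P *ᵥ Pi.single i 1) (P *ᵥ Pi.single j 1)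

end IsStarProjection

theorem Real.eq_of_one_le_sum_sqrt_mul_sqrt {ι : Type*} [Fintype ι] {f g : ι → ℝ}
    (hf : ∀ i, 0 ≤ f i) (hg : ∀ i, 0 ≤ g i) (hf1 : ∑ i, f i = 1) (hg1 : ∑ i, g i = 1)
    (h : 1 ≤ ∑ i, √(f i) * √(g i)) : f = g := by
  have hsq : ∀ i, (√(f i) - √(g i)) ^ 2 = f i + g i - 2 * (√(f i) * √(g i)) := fun i => by
    rw [sub_sq, Real.sq_sqrt (hf i), Real.sq_sqrt (hg i)]; ring
  have hzero : ∑ i, (√(f i) - √(g i)) ^ 2 = 0 := by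
    refine le_antisymm ?_ (Finset.sum_nonneg fun i _ => sq_nonneg _)
    simp only [hsq, Finset.sum_sub_distrib, Finset.sum_add_distrib, ← Finset.mul_sum, hf1, hg1]
    linarith
  funext i
  have := (Finset.sum_eq_zero_iff_of_nonneg fun i _ => sq_nonneg _).1 hzero i (Finset.mem_univ i)
  rwa [sq_eq_zero_iff, sub_eq_zero, Real.sqrt_inj (hf i) (hg i)] at this

section SpectralIdempotents

variable {ι n : Type*} [Fintype ι] [Fintype n] [DecidableEq n] {E : ι → Matrix n n ℝ}

theorem CompleteOrthogonalIdempotents.sum_apply_self (hE : CompleteOrthogonalIdempotents E)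
    (i : n) : ∑ r, E r i i = 1 := by
  simpa [Matrix.sum_apply] using congrFun (congrFun hE.complete i) i

theorem CompleteOrthogonalIdempotents.apply_eq_and_abs_apply_eq_of_one_le_sum_abs
    (hE : CompleteOrthogonalIdempotents E) (hsa : ∀ r, IsSelfAdjoint (E r)) {a b : n}
    (h : 1 ≤ ∑ r, |E r a b|) (r : ι) : E r a a = E r b b ∧ |E r a b| = E r a a := by
  have hP (s : ι) : IsStarProjection (E s) := ⟨hE.idem s, hsa s⟩
  have hnonneg (i : n) (s : ι) : 0 ≤ E s i i := (hP s).apply_self_nonneg i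
  have hCS (s : ι) : |E s a b| ≤ √(E s a a) * √(E s b b) := (hP s).abs_apply_le_sqrt_mul_sqrt a b
  have hsum_le : ∑ s, √(E s a a) * √(E s b b) ≤ 1 := by
    simpa [hE.sum_apply_self] using
      Real.sum_sqrt_mul_sqrt_le Finset.univ (hnonneg a) (hnonneg b)
  have hdiag := congrFun (Real.eq_of_one_le_sum_sqrt_mul_sqrt (hnonneg a) (hnonneg b)
    (hE.sum_apply_self a) (hE.sum_apply_self b) (h.trans (Finset.sum_le_sum fun s _ => hCS s))) r
  have hCS_eq := (Finset.sum_eq_sum_iff_of_le fun s _ => hCS s).1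
    (le_antisymm (Finset.sum_le_sum fun s _ => hCS s) (hsum_le.trans h)) r (Finset.mem_univ r)
  refine ⟨hdiag, ?_⟩
  rw [hCS_eq, ← hdiag, Real.mul_self_sqrt (hnonneg a r)]

theorem CompleteOrthogonalIdempotents.exists_sign_of_one_le_sum_abs
    (hE : CompleteOrthogonalIdempotents E) (hsa : ∀ r, IsSelfAdjoint (E r)) {a b : n}
    (h : 1 ≤ ∑ r, |E r a b|) (r : ι) :
    ∃ σ : ℝ, (σ = 1 ∨ σ = -1) ∧ E r *ᵥ Pi.single a 1 = σ • (E r *ᵥ Pi.single b 1) := by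
  obtain ⟨hdiag, habs⟩ := hE.apply_eq_and_abs_apply_eq_of_one_le_sum_abs hsa h r
  apply exists_sign_eq_smul_of_abs_dotProduct_eq <;>
    simp only [IsStarProjection.mulVec_single_dotProduct_mulVec_single ⟨hE.idem r, hsa r⟩]
  exacts [hdiag, habs]

end SpectralIdempotents

section QuantumWalk

variable {ι n : Type*} [Fintype ι] [Fintype n] [DecidableEq n] {E : ι → Matrix n n ℝ}
  {θ : ι → ℝ} {A : Matrix n n ℝ}

theorem CompleteOrthogonalIdempotents.exp_smul_map_ofReal (hE : CompleteOrthogonalIdempotents E)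
    (hspec : A = ∑ r, θ r • E r) (z : ℂ) :
    NormedSpace.exp (z • A.map Complex.ofReal) =
      ∑ r, Complex.exp (z * θ r) • (E r).map Complex.ofReal := by
  have hEc : CompleteOrthogonalIdempotents fun r => (E r).map Complex.ofReal :=
    hE.map (RingHom.mapMatrix Complex.ofRealHom : Matrix n n ℝ →+* Matrix n n ℂ)
  rw [← hEc.exp_sum_smul]
  congr 1
  ext i j
  simp [hspec, Matrix.sum_apply, Finset.mul_sum, mul_assoc]

theorem CompleteOrthogonalIdempotents.norm_exp_I_mul_smul_apply_le
    (hE : CompleteOrthogonalIdempotents E) (hspec : A = ∑ r, θ r • E r) (t : ℝ) (a b : n) :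
    ‖NormedSpace.exp ((Complex.I * t) • A.map Complex.ofReal) a b‖ ≤ ∑ r, |E r a b| := by
  rw [hE.exp_smul_map_ofReal hspec, Matrix.sum_apply]
  refine (norm_sum_le _ _).trans (Finset.sum_le_sum fun r _ => ?_)
  simp [Complex.norm_exp]

end QuantumWalk

theorem pgst_implies_strongly_cospectral_general
    {n d : ℕ}
    (A : Matrix (Fin n) (Fin n) ℝ)
    (θ : Fin (d + 1) → ℝ)
    (E : Fin (d + 1) → Matrix (Fin n) (Fin n) ℝ)
    (hspec : A = ∑ r, θ r • E r)
    (hsym : ∀ r, (E r)ᵀ = E r)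
    (hidem : ∀ r, E r * E r = E r)
    (horth : ∀ r s, r ≠ s → E r * E s = 0)
    (hsum : ∑ r, E r = 1)
    (a b : Fin n)
    (hpgst : ∀ ε : ℝ, 0 < ε → ∃ t : ℝ, 0 ≤ t ∧
      1 - ε < ‖
        ((NormedSpace.exp ((Complex.I * (t : ℂ)) • A.map Complex.ofReal)) a b)‖) :
    ∀ r, ∃ σ : ℝ, (σ = 1 ∨ σ = -1) ∧
      (E r) *ᵥ (Pi.single a 1) = σ • ((E r) *ᵥ (Pi.single b 1)) := by
  have hE : CompleteOrthogonalIdempotents E := ⟨⟨hidem, fun r s hrs => horth r s hrs⟩, hsum⟩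
  have hsa (r) : IsSelfAdjoint (E r) := (conjTranspose_eq_transpose_of_trivial _).trans (hsym r)
  refine hE.exists_sign_of_one_le_sum_abs hsa (le_of_forall_pos_lt_add fun ε hε => ?_)
  obtain ⟨t, -, ht⟩ := hpgst ε hε
  linarith [hE.norm_exp_I_mul_smul_apply_le hspec t a b]

/-- If pretty good state transfer occurs from vertex `a` to vertex `b`
in the continuous-time quantum walk on a finite simple graph `G` with adjacency matrix
`A = ∑ r, θ r • E r` (spectral decomposition), then `a` and `b` are strongly cospectral:
for every `r` there is `σ ∈ {1, -1}` with `E r • e_a = σ • (E r • e_b)`. -/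
theorem pgst_implies_strongly_cospectral
    {n d : ℕ} (G : SimpleGraph (Fin n)) [DecidableRel G.Adj]
    (A : Matrix (Fin n) (Fin n) ℝ) (hA : A = G.adjMatrix ℝ)
    (θ : Fin (d + 1) → ℝ) (hθ : Function.Injective θ)
    (E : Fin (d + 1) → Matrix (Fin n) (Fin n) ℝ)
    (hspec : A = ∑ r, θ r • E r)
    (hsym : ∀ r, (E r)ᵀ = E r)
    (hidem : ∀ r, E r * E r = E r)
    (horth : ∀ r s, r ≠ s → E r * E s = 0)
    (hsum : ∑ r, E r = 1)
    (hE0 : ∀ r, E r ≠ 0)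
    (a b : Fin n)
    (hpgst : ∀ ε : ℝ, 0 < ε → ∃ t : ℝ, 0 ≤ t ∧
      1 - ε < ‖
        ((NormedSpace.exp ((Complex.I * (t : ℂ)) • A.map Complex.ofReal)) a b)‖) :
    ∀ r, ∃ σ : ℝ, (σ = 1 ∨ σ = -1) ∧
      (E r) *ᵥ (Pi.single a 1) = σ • ((E r) *ᵥ (Pi.single b 1)) :=
  pgst_implies_strongly_cospectral_general A θ E hspec hsym hidem horth hsum a b hpgst
end

section
/- Let A be the adjacency matrix of a finite simple graph G, with spectral decomposition A = Σ_{r=0}^d θ_r E_r, and let a, b be strongly cospectral vertices. Let Θ₊ = {θ_r : E_r e_a = E_r e_b ≠ 0} and Θ₋ = {θ_r : E_r e_a = −E_r e_b ≠ 0}. Then the monic polynomials φ₊(x) = ∏_{θ∈Θ₊}(x − θ) and φ₋(x) = ∏_{θ∈Θ₋}(x − θ) both have integer coefficients, Θ₊ and Θ₋ are disjoint, and the product φ₊(x)·φ₋(x) divides the characteristic polynomial of A in ℤ[x]. -/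
open Matrix Polynomial

/-!
Put `w = e_a + e_b`. Applying the projections `E_r` shows that a real polynomial `p` satisfies
`p(A) w = 0` exactly when `p` vanishes at every `θ_r` with `E_r w ≠ 0`, and strong cospectrality
makes `E_r w ≠ 0` equivalent to `r ∈ Θ₊`; so `φ₊` generates the annihilator of `w` under `A`.
With `k = deg φ₊`, the Krylov vectors `w, A w, …, A^k w` are linearly dependent over `ℝ`, hence,
being rational, over `ℚ`. The resulting rational polynomial of degree at most `k` annihilating `w`
is a scalar multiple of `φ₊`, so `φ₊` is rational, and as a monic divisor of the integral
characteristic polynomial it is integral by Gauss's lemma. The same argument with `w = e_a - e_b`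
handles `φ₋`, and since the `θ_r` are distinct roots of `χ_A`, the product `φ₊ φ₋` divides `χ_A`.
-/

section Eigen
variable {R M : Type*} [CommSemiring R] [Semiring M] [Algebra R M] {A E : M} {t : R}

theorem pow_mul_of_mul_eq_smul (h : A * E = t • E) (k : ℕ) : A ^ k * E = t ^ k • E := by
  induction k with
  | zero => simp
  | succ k ih => rw [pow_succ', mul_assoc, ih, mul_smul_comm, h, smul_smul, pow_succ]

theorem mul_pow_of_mul_eq_smul (h : E * A = t • E) (k : ℕ) : E * A ^ k = t ^ k • E := by
  induction k with
  | zero => simp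
  | succ k ih => rw [pow_succ, ← mul_assoc, ih, smul_mul_assoc, h, smul_smul, pow_succ]

theorem aeval_mul_of_mul_eq_smul (h : A * E = t • E) (p : R[X]) :
    aeval A p * E = p.eval t • E := by
  induction p using Polynomial.induction_on' with
  | add p q hp hq => rw [map_add, add_mul, hp, hq, eval_add, add_smul]
  | monomial k c =>
    rw [aeval_monomial, mul_assoc, pow_mul_of_mul_eq_smul h, ← Algebra.smul_def, smul_smul,
      eval_monomial]

theorem mul_aeval_of_mul_eq_smul (h : E * A = t • E) (p : R[X]) :
    E * aeval A p = p.eval t • E := by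
  induction p using Polynomial.induction_on' with
  | add p q hp hq => rw [map_add, mul_add, hp, hq, eval_add, add_smul]
  | monomial k c =>
    rw [aeval_monomial, Algebra.left_comm, mul_pow_of_mul_eq_smul h, ← Algebra.smul_def,
      smul_smul, eval_monomial]

end Eigen

section Sign
variable {V : Type*} [AddCommGroup V] [IsAddTorsionFree V] {x y : V}

theorem add_ne_zero_iff_of_eq_or_eq_neg (h : x = y ∨ x = -y) : x + y ≠ 0 ↔ x = y ∧ x ≠ 0 := by
  rcases h with rfl | rfl
  · simp [add_eq_zero_iff_eq_neg, self_eq_neg]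
  · simp [neg_eq_iff_eq_neg, self_eq_neg]

theorem sub_ne_zero_iff_of_eq_or_eq_neg (h : x = y ∨ x = -y) : x - y ≠ 0 ↔ x = -y ∧ x ≠ 0 := by
  rw [sub_eq_add_neg]
  exact add_ne_zero_iff_of_eq_or_eq_neg (by rwa [neg_neg, or_comm])

end Sign

theorem prod_X_sub_C_dvd_iff_eval_eq_zero {K ι : Type*} [Field K] {θ : ι → K}
    (hθ : Function.Injective θ) (S : Finset ι) (p : K[X]) :
    ∏ r ∈ S, (X - C (θ r)) ∣ p ↔ ∀ r ∈ S, p.eval (θ r) = 0 := by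
  refine ⟨fun h r hr => dvd_iff_isRoot.mp
    ((Finset.dvd_prod_of_mem (fun r => X - C (θ r)) hr).trans h), fun h => ?_⟩
  exact Finset.prod_dvd_of_coprime ((pairwise_coprime_X_sub_C hθ).set_pairwise (S : Set ι))
    fun r hr => dvd_iff_isRoot.mpr (h r hr)

section Spectral
variable {m ι K : Type*} [Fintype m] [DecidableEq m] [Fintype ι] [Field K]
  {A : Matrix m m K} {θ : ι → K} {E : ι → Matrix m m K}
  (hspec : A = ∑ r, θ r • E r) (hidem : ∀ r, E r * E r = E r)
  (horth : ∀ r s, r ≠ s → E r * E s = 0)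
include hspec hidem horth

theorem mul_proj_of_spectral (r : ι) : A * E r = θ r • E r := by
  rw [hspec, Finset.sum_mul, Finset.sum_eq_single r (fun s _ hsr => by
    rw [smul_mul_assoc, horth s r hsr, smul_zero]) (by simp), smul_mul_assoc, hidem]

theorem proj_mul_of_spectral (r : ι) : E r * A = θ r • E r := by
  rw [hspec, Finset.mul_sum, Finset.sum_eq_single r (fun s _ hsr => by
    rw [mul_smul_comm, horth r s hsr.symm, smul_zero]) (by simp), mul_smul_comm, hidem]

theorem eval_charpoly_eq_zero_of_spectral (hE0 : ∀ r, E r ≠ 0) (r : ι) :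
    A.charpoly.eval (θ r) = 0 := by
  have h := aeval_mul_of_mul_eq_smul (mul_proj_of_spectral hspec hidem horth r) A.charpoly
  rw [aeval_self_charpoly, zero_mul, eq_comm, smul_eq_zero] at h
  exact h.resolve_right (hE0 r)

theorem prod_X_sub_C_dvd_charpoly_of_spectral (hθ : Function.Injective θ)
    (hE0 : ∀ r, E r ≠ 0) (S : Finset ι) : ∏ r ∈ S, (X - C (θ r)) ∣ A.charpoly :=
  (prod_X_sub_C_dvd_iff_eval_eq_zero hθ S _).mpr fun r _ =>
    eval_charpoly_eq_zero_of_spectral hspec hidem horth hE0 r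

theorem aeval_mulVec_eq_zero_iff_of_spectral (hsum : ∑ r, E r = 1) (w : m → K) (p : K[X]) :
    aeval A p *ᵥ w = 0 ↔ ∀ r, E r *ᵥ w ≠ 0 → p.eval (θ r) = 0 := by
  constructor
  · intro h r hr
    have hproj : E r *ᵥ (aeval A p *ᵥ w) = p.eval (θ r) • (E r *ᵥ w) := by
      rw [mulVec_mulVec, mul_aeval_of_mul_eq_smul (proj_mul_of_spectral hspec hidem horth r),
        smul_mulVec]
    rw [h, mulVec_zero, eq_comm, smul_eq_zero] at hproj
    exact hproj.resolve_right hr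
  · intro h
    calc aeval A p *ᵥ w = aeval A p *ᵥ ((∑ r, E r) *ᵥ w) := by rw [hsum, one_mulVec]
      _ = ∑ r, p.eval (θ r) • (E r *ᵥ w) := by
        rw [mulVec_mulVec, Finset.mul_sum, sum_mulVec]
        simp only [aeval_mul_of_mul_eq_smul (mul_proj_of_spectral hspec hidem horth _),
          smul_mulVec]
      _ = 0 := Finset.sum_eq_zero fun r _ => by
        by_cases hr : E r *ᵥ w = 0
        · rw [hr, smul_zero]
        · rw [h r hr, zero_smul]

theorem aeval_mulVec_eq_zero_iff_prod_dvd_of_spectral (hsum : ∑ r, E r = 1)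
    (hθ : Function.Injective θ) {w : m → K} {S : Finset ι} (hS : ∀ r, r ∈ S ↔ E r *ᵥ w ≠ 0)
    (p : K[X]) : aeval A p *ᵥ w = 0 ↔ ∏ r ∈ S, (X - C (θ r)) ∣ p := by
  simp only [aeval_mulVec_eq_zero_iff_of_spectral hspec hidem horth hsum,
    prod_X_sub_C_dvd_iff_eval_eq_zero hθ, hS]

end Spectral

section Descent
variable {m : Type*} [Fintype m] [DecidableEq m]

theorem aeval_mulVec_eq_sum {R : Type*} [CommRing R] (A : Matrix m m R) (w : m → R) {p : R[X]}
    {k : ℕ} (hp : p.natDegree < k) :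
    aeval A p *ᵥ w = ∑ i : Fin k, p.coeff i • (A ^ (i : ℕ) *ᵥ w) := by
  rw [aeval_eq_sum_range' hp, sum_mulVec, ← Fin.sum_univ_eq_sum_range]
  simp only [smul_mulVec]

theorem algebraMap_comp_aeval_mulVec {R S : Type*} [CommRing R] [CommRing S] [Algebra R S]
    (A : Matrix m m R) (w : m → R) (p : R[X]) :
    algebraMap R S ∘ (aeval A p *ᵥ w) =
      aeval (A.map (algebraMap R S)) (p.map (algebraMap R S)) *ᵥ (algebraMap R S ∘ w) := by
  rw [aeval_map_algebraMap]
  change _ = aeval ((Algebra.ofId R S).mapMatrix A) p *ᵥ _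
  rw [aeval_algHom_apply]
  ext i
  exact RingHom.map_mulVec _ _ _ i

theorem exists_map_eq_of_aeval_mulVec_eq_zero_iff_dvd {K L : Type*} [Field K] [Field L]
    [Algebra K L] (A : Matrix m m K) (w : m → K) {φ : L[X]} (hφ : φ.Monic)
    (hann : ∀ p : L[X],
      aeval (A.map (algebraMap K L)) p *ᵥ (algebraMap K L ∘ w) = 0 ↔ φ ∣ p) :
    ∃ q : K[X], q.Monic ∧ q.map (algebraMap K L) = φ := by
  set k := φ.natDegree
  have hkrylov : ¬ LinearIndependent K fun i : Fin (k + 1) => A ^ (i : ℕ) *ᵥ w := by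
    rw [← linearIndependent_algebraMap_comp_iff (S := L), Fintype.not_linearIndependent_iff]
    refine ⟨fun i => φ.coeff i, ?_, Fin.last k, by simp [k, hφ.coeff_natDegree]⟩
    have hpow (i : ℕ) : algebraMap K L ∘ (A ^ i *ᵥ w) =
        A.map (algebraMap K L) ^ i *ᵥ (algebraMap K L ∘ w) := by
      simpa using algebraMap_comp_aeval_mulVec (S := L) A w (X ^ i)
    simp only [hpow]
    rw [← aeval_mulVec_eq_sum _ _ (Nat.lt_succ_self k), hann]
  obtain ⟨g, hg, i, hi⟩ := Fintype.not_linearIndependent_iff.mp hkrylov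
  set q : K[X] := ((degreeLTEquiv K (k + 1)).symm g : K[X])
  have hqcoeff (i : Fin (k + 1)) : q.coeff i = g i :=
    congrFun ((degreeLTEquiv K (k + 1)).apply_symm_apply g) i
  have hq0 : q ≠ 0 := fun h => hi (by rw [← hqcoeff, h, coeff_zero])
  have hqdeg : q.natDegree < k + 1 :=
    (natDegree_lt_iff_degree_lt hq0).mpr (mem_degreeLT.mp ((degreeLTEquiv K (k + 1)).symm g).2)
  have hdvd : φ ∣ q.map (algebraMap K L) := by
    rw [← hann, ← algebraMap_comp_aeval_mulVec, aeval_mulVec_eq_sum A w hqdeg]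
    simp only [hqcoeff, hg]
    exact funext fun _ => map_zero _
  refine ⟨q * C q.leadingCoeff⁻¹, monic_mul_leadingCoeff_inv hq0,
    eq_of_monic_of_dvd_of_natDegree_le hφ ((monic_mul_leadingCoeff_inv hq0).map _) ?_ ?_⟩
  · rw [Polynomial.map_mul]
    exact hdvd.mul_right _
  · exact natDegree_map_le.trans ((natDegree_mul_C_le _ _).trans (Nat.le_of_lt_succ hqdeg))

end Descent

theorem exists_map_eq_of_map_dvd_map {R K L : Type*} [CommRing R]
    [IsIntegrallyClosed R] [Field K] [Algebra R K] [IsFractionRing R K] [Field L] [Algebra K L]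
    [Algebra R L] [IsScalarTower R K L] {χ : R[X]} (hχ : χ.Monic) {q : K[X]} (hq : q.Monic)
    (hdvd : q.map (algebraMap K L) ∣ χ.map (algebraMap R L)) :
    ∃ P : R[X], P.Monic ∧ P.map (algebraMap R K) = q := by
  rw [IsScalarTower.algebraMap_eq R K L, ← Polynomial.map_map, map_dvd_map'] at hdvd
  obtain ⟨P, hP⟩ := IsIntegrallyClosed.eq_map_mul_C_of_dvd K hχ hdvd
  rw [hq.leadingCoeff, C_1, mul_one] at hP
  exact ⟨P, monic_of_injective (IsFractionRing.injective R K) (hP ▸ hq), hP⟩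

theorem exists_monic_map_eq_prod_of_spectral {m ι R K L : Type*} [Fintype m] [DecidableEq m]
    [Fintype ι] [CommRing R] [IsIntegrallyClosed R] [Field K] [Algebra R K]
    [IsFractionRing R K] [Field L] [Algebra K L] [Algebra R L] [IsScalarTower R K L]
    {A : Matrix m m R} {θ : ι → L} {E : ι → Matrix m m L}
    (hspec : A.map (algebraMap R L) = ∑ r, θ r • E r) (hidem : ∀ r, E r * E r = E r)
    (horth : ∀ r s, r ≠ s → E r * E s = 0) (hsum : ∑ r, E r = 1) (hE0 : ∀ r, E r ≠ 0)
    (hθ : Function.Injective θ) {w : m → R} {S : Finset ι}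
    (hS : ∀ r, r ∈ S ↔ E r *ᵥ (algebraMap R L ∘ w) ≠ 0) :
    ∃ P : R[X], P.Monic ∧ P.map (algebraMap R L) = ∏ r ∈ S, (X - C (θ r)) := by
  have htower : algebraMap R L = (algebraMap K L).comp (algebraMap R K) :=
    IsScalarTower.algebraMap_eq R K L
  obtain ⟨q, hq, hqφ⟩ := exists_map_eq_of_aeval_mulVec_eq_zero_iff_dvd (L := L)
    (A.map (algebraMap R K)) (algebraMap R K ∘ w)
    (monic_prod_of_monic _ _ fun r _ => monic_X_sub_C _)
    (by simpa only [Matrix.map_map, ← Function.comp_assoc, ← RingHom.coe_comp, ← htower] using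
      aeval_mulVec_eq_zero_iff_prod_dvd_of_spectral hspec hidem horth hsum hθ hS)
  obtain ⟨P, hP, hPq⟩ := exists_map_eq_of_map_dvd_map (L := L) (charpoly_monic A) hq (by
    rw [hqφ, ← charpoly_map]
    exact prod_X_sub_C_dvd_charpoly_of_spectral hspec hidem horth hθ hE0 S)
  exact ⟨P, hP, by rw [htower, ← Polynomial.map_map, hPq, hqφ]⟩

theorem plus_minus_factors_integral_general
    {n d : ℕ} (G : SimpleGraph (Fin n)) [DecidableRel G.Adj]
    (A : Matrix (Fin n) (Fin n) ℝ) (hA : A = G.adjMatrix ℝ)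
    (θ : Fin (d + 1) → ℝ) (hθ : Function.Injective θ)
    (E : Fin (d + 1) → Matrix (Fin n) (Fin n) ℝ)
    (hspec : A = ∑ r, θ r • E r)
    (hidem : ∀ r, E r * E r = E r)
    (horth : ∀ r s, r ≠ s → E r * E s = 0)
    (hsum : ∑ r, E r = 1)
    (hE0 : ∀ r, E r ≠ 0)
    (a b : Fin n)
    (hsc : ∀ r, ∃ σ : ℝ, (σ = 1 ∨ σ = -1) ∧
      (E r) *ᵥ (Pi.single a 1) = σ • ((E r) *ᵥ (Pi.single b 1)))
    (Θp Θm : Finset (Fin (d + 1)))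
    (hΘp : ∀ r, r ∈ Θp ↔
      ((E r) *ᵥ (Pi.single a 1) = (E r) *ᵥ (Pi.single b 1) ∧
        (E r) *ᵥ (Pi.single a 1) ≠ 0))
    (hΘm : ∀ r, r ∈ Θm ↔
      ((E r) *ᵥ (Pi.single a 1) = -((E r) *ᵥ (Pi.single b 1)) ∧
        (E r) *ᵥ (Pi.single a 1) ≠ 0)) :
    (∃ P : Polynomial ℤ, P.map (Int.castRingHom ℝ) = ∏ r ∈ Θp, (X - C (θ r))) ∧
    (∃ Q : Polynomial ℤ, Q.map (Int.castRingHom ℝ) = ∏ r ∈ Θm, (X - C (θ r))) ∧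
    Disjoint (Θp.image θ) (Θm.image θ) ∧
    (∃ P Q R : Polynomial ℤ,
      P.map (Int.castRingHom ℝ) = ∏ r ∈ Θp, (X - C (θ r)) ∧
      Q.map (Int.castRingHom ℝ) = ∏ r ∈ Θm, (X - C (θ r)) ∧
      (P * Q * R).map (Int.castRingHom ℝ) = A.charpoly) := by
  have hAZ : (G.adjMatrix ℤ).map (algebraMap ℤ ℝ) = A := by
    ext i j
    simp [hA, SimpleGraph.adjMatrix_apply, apply_ite]
  have hsign (r) : E r *ᵥ Pi.single a 1 = E r *ᵥ Pi.single b 1 ∨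
      E r *ᵥ Pi.single a 1 = -(E r *ᵥ Pi.single b 1) := by
    obtain ⟨σ, rfl | rfl, h⟩ := hsc r <;> simp [h]
  rw [← hAZ] at hspec
  obtain ⟨P, hPm, hP⟩ := exists_monic_map_eq_prod_of_spectral (K := ℚ) hspec hidem horth hsum
    hE0 hθ (w := Pi.single a 1 + Pi.single b 1) fun r => by
      rw [show algebraMap ℤ ℝ ∘ (Pi.single a 1 + Pi.single b 1 : Fin n → ℤ) =
        Pi.single a 1 + Pi.single b 1 by ext i; simp [Pi.single_apply], mulVec_add,
        add_ne_zero_iff_of_eq_or_eq_neg (hsign r), hΘp]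
  obtain ⟨Q, hQm, hQ⟩ := exists_monic_map_eq_prod_of_spectral (K := ℚ) hspec hidem horth hsum
    hE0 hθ (w := Pi.single a 1 - Pi.single b 1) fun r => by
      rw [show algebraMap ℤ ℝ ∘ (Pi.single a 1 - Pi.single b 1 : Fin n → ℤ) =
        Pi.single a 1 - Pi.single b 1 by ext i; simp [Pi.single_apply], mulVec_sub,
        sub_ne_zero_iff_of_eq_or_eq_neg (hsign r), hΘm]
  rw [algebraMap_int_eq] at hP hQ hAZ
  have hdisj : Disjoint Θp Θm := Finset.disjoint_left.mpr fun r hp hm => by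
    obtain ⟨hab, ha⟩ := (hΘp r).mp hp
    exact ha (self_eq_neg.mp (((hΘm r).mp hm).1.trans (congrArg Neg.neg hab.symm)))
  obtain ⟨R, hR⟩ : P * Q ∣ (G.adjMatrix ℤ).charpoly := by
    rw [← map_dvd_map (Int.castRingHom ℝ) Int.cast_injective (hPm.mul hQm), Polynomial.map_mul,
      hP, hQ, ← Finset.prod_union hdisj, ← charpoly_map, hAZ]
    exact prod_X_sub_C_dvd_charpoly_of_spectral (hAZ ▸ hspec) hidem horth hθ hE0 _
  refine ⟨⟨P, hP⟩, ⟨Q, hQ⟩, (Finset.disjoint_image hθ).mpr hdisj, P, Q, R, hP, hQ, ?_⟩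
  rw [← hR, ← charpoly_map, hAZ]

/-- For strongly cospectral vertices `a`, `b` of a graph with spectral
decomposition `A = ∑ r, θ r • E r`, the polynomials `φ₊ = ∏_{θ∈Θ₊} (X - θ)` and
`φ₋ = ∏_{θ∈Θ₋} (X - θ)` have integer coefficients, `Θ₊` and `Θ₋` are disjoint, and
`φ₊ * φ₋` divides the characteristic polynomial of `A` in `ℤ[x]`. -/
theorem plus_minus_factors_integral
    {n d : ℕ} (G : SimpleGraph (Fin n)) [DecidableRel G.Adj]
    (A : Matrix (Fin n) (Fin n) ℝ) (hA : A = G.adjMatrix ℝ)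
    (θ : Fin (d + 1) → ℝ) (hθ : Function.Injective θ)
    (E : Fin (d + 1) → Matrix (Fin n) (Fin n) ℝ)
    (hspec : A = ∑ r, θ r • E r)
    (hsym : ∀ r, (E r)ᵀ = E r)
    (hidem : ∀ r, E r * E r = E r)
    (horth : ∀ r s, r ≠ s → E r * E s = 0)
    (hsum : ∑ r, E r = 1)
    (hE0 : ∀ r, E r ≠ 0)
    (a b : Fin n)
    (hsc : ∀ r, ∃ σ : ℝ, (σ = 1 ∨ σ = -1) ∧
      (E r) *ᵥ (Pi.single a 1) = σ • ((E r) *ᵥ (Pi.single b 1)))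
    (Θp Θm : Finset (Fin (d + 1)))
    (hΘp : ∀ r, r ∈ Θp ↔
      ((E r) *ᵥ (Pi.single a 1) = (E r) *ᵥ (Pi.single b 1) ∧
        (E r) *ᵥ (Pi.single a 1) ≠ 0))
    (hΘm : ∀ r, r ∈ Θm ↔
      ((E r) *ᵥ (Pi.single a 1) = -((E r) *ᵥ (Pi.single b 1)) ∧
        (E r) *ᵥ (Pi.single a 1) ≠ 0)) :
    (∃ P : Polynomial ℤ, P.map (Int.castRingHom ℝ) = ∏ r ∈ Θp, (X - C (θ r))) ∧
    (∃ Q : Polynomial ℤ, Q.map (Int.castRingHom ℝ) = ∏ r ∈ Θm, (X - C (θ r))) ∧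
    Disjoint (Θp.image θ) (Θm.image θ) ∧
    (∃ P Q R : Polynomial ℤ,
      P.map (Int.castRingHom ℝ) = ∏ r ∈ Θp, (X - C (θ r)) ∧
      Q.map (Int.castRingHom ℝ) = ∏ r ∈ Θm, (X - C (θ r)) ∧
      (P * Q * R).map (Int.castRingHom ℝ) = A.charpoly) :=
  plus_minus_factors_integral_general G A hA θ hθ E hspec hidem horth hsum hE0 a b hsc Θp Θm hΘp hΘm
end

section
/- (Kronecker's theorem) Let θ_0,…,θ_d and ζ_0,…,ζ_d be arbitrary real numbers. The following are equivalent: (i) for every ε > 0 there exists y ≥ 0 such that for each r ∈ {0,…,d} there is an integer k_r with |θ_r y − ζ_r − 2πk_r| < ε; (ii) whenever integers ℓ_0,…,ℓ_d satisfy ℓ_0θ_0 + … + ℓ_dθ_d = 0, they also satisfy ℓ_0ζ_0 + … + ℓ_dζ_d ∈ 2πℤ. -/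
/-!
Bohr's proof. Put `p(y) = ∑ᵣ exp(i(θᵣ y - ζᵣ))` with `n` terms. The mean of `|p|^(2k)` over
`[0, T]` tends to the number of pairs of `k`-tuples of indices with equal `θ`-sums: the terms
with nonzero frequency average out, and by (ii) the others have trivial phase. Tuples with
the same multiplicities have the same `θ`-sum, so by Cauchy–Schwarz there are at least
`n^(2k) / (k + 1)^n` such pairs; letting `k → ∞` gives `sup_{y ≥ 0} |p(y)| = n`. Adjoining the
frequency `0` with phase `0` then forces all `exp(i(θᵣ y - ζᵣ))` close to `1` at once.

Conversely, `a ↦ ∑ ℓᵣ aᵣ` is a continuous character of the torus which is constantly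
`-∑ ℓᵣ ζᵣ` on the orbit `y ↦ (θᵣ y - ζᵣ)ᵣ` when `∑ ℓᵣ θᵣ = 0`, and `0` lies in the closure of
the orbit by (i).
-/

open Real Filter Finset Complex Topology

namespace Kronecker

lemma exists_int_eq_two_pi_mul_iff (x : ℝ) :
    (∃ m : ℤ, x = 2 * π * m) ↔ (x : Real.Angle) = 0 := by
  simp only [Real.Angle.coe_eq_zero_iff, zsmul_eq_mul, eq_comm (a := x), mul_comm (2 * π)]

lemma exists_int_abs_sub_lt_iff (x ε : ℝ) :
    (∃ k : ℤ, |x - 2 * π * k| < ε) ↔ ‖(x : Real.Angle)‖ < ε := by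
  refine ⟨fun ⟨k, hk⟩ => QuotientAddGroup.norm_lt_iff.2 ⟨x - 2 * π * k, ?_, hk⟩, fun h => ?_⟩
  · exact Real.Angle.angle_eq_iff_two_pi_dvd_sub.2 ⟨-k, by push_cast; ring⟩
  · obtain ⟨m, hm, hlt⟩ := QuotientAddGroup.norm_lt_iff.1 h
    obtain ⟨k, hk⟩ := Real.Angle.angle_eq_iff_two_pi_dvd_sub.1 hm.symm
    exact ⟨k, by rwa [← hk, sub_sub_cancel]⟩

lemma exp_ofReal_mul_I_eq_toCircle (x : ℝ) : exp (x * I) = ((x : Real.Angle).toCircle : ℂ) := by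
  rw [Real.Angle.toCircle_coe, Circle.coe_exp]

lemma norm_le_pi_div_two_mul_norm_toCircle_sub_one (θ : Real.Angle) :
    ‖θ‖ ≤ π / 2 * ‖(θ.toCircle : ℂ) - 1‖ := by
  rw [← θ.coe_toReal]
  set t := θ.toReal
  have ht : |t| ≤ π := θ.abs_toReal_le_pi
  have hnorm : ‖(t : Real.Angle)‖ = |t| :=
    (AddCircle.norm_coe_eq_abs_iff _ two_pi_pos.ne').2 <| by
      rwa [abs_of_pos two_pi_pos, mul_div_cancel_left₀ _ two_ne_zero]
  rw [hnorm, Real.Angle.toCircle_coe, Circle.coe_exp, mul_comm (t : ℂ),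
    norm_exp_I_mul_ofReal_sub_one, norm_mul, Real.norm_two, Real.norm_eq_abs]
  have := mul_abs_le_abs_sin (x := t / 2) (by rw [abs_div, abs_two]; linarith)
  rw [abs_div, abs_two] at this
  have hπ := pi_pos
  calc |t| = π / 2 * (2 * (2 / π * (|t| / 2))) := by field_simp
    _ ≤ π / 2 * (2 * |Real.sin (t / 2)|) := by gcongr

lemma sq_norm_sub_le_of_norm_eq_one {E : Type*} [NormedAddCommGroup E] [InnerProductSpace ℝ E]
    {u v : E} (hu : ‖u‖ = 1) (hv : ‖v‖ = 1) : ‖u - v‖ ^ 2 ≤ 4 * (2 - ‖u + v‖) := by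
  have hpar := parallelogram_law_with_norm ℝ u v
  have hle : ‖u + v‖ ≤ 2 := (norm_add_le u v).trans (by rw [hu, hv]; norm_num)
  rw [hu, hv] at hpar
  nlinarith [norm_nonneg (u + v)]

lemma norm_sq_lt_of_two_sub_lt_norm_toCircle_add_one (θ : Real.Angle) {δ : ℝ}
    (h : 2 - δ < ‖(θ.toCircle : ℂ) + 1‖) : ‖θ‖ ^ 2 < π ^ 2 * δ :=
  calc ‖θ‖ ^ 2 ≤ (π / 2 * ‖(θ.toCircle : ℂ) - 1‖) ^ 2 :=
        pow_le_pow_left₀ (norm_nonneg _) (norm_le_pi_div_two_mul_norm_toCircle_sub_one θ) 2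
    _ = π ^ 2 / 4 * ‖(θ.toCircle : ℂ) - 1‖ ^ 2 := by ring
    _ ≤ π ^ 2 / 4 * (4 * (2 - ‖(θ.toCircle : ℂ) + 1‖)) := by
        gcongr
        exact sq_norm_sub_le_of_norm_eq_one (Circle.norm_coe _) norm_one
    _ = π ^ 2 * (2 - ‖(θ.toCircle : ℂ) + 1‖) := by ring
    _ < π ^ 2 * δ := by gcongr; linarith

lemma two_sub_lt_norm_add_of_card_sub_lt_norm_sum {ι E : Type*} [Fintype ι]
    [SeminormedAddCommGroup E] {z : ι → E} (hz : ∀ i, ‖z i‖ ≤ 1) {i j : ι} (hij : i ≠ j)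
    {δ : ℝ} (h : Fintype.card ι - δ < ‖∑ k, z k‖) : 2 - δ < ‖z i + z j‖ := by
  classical
  have hj : j ∈ univ.erase i := mem_erase.2 ⟨hij.symm, mem_univ j⟩
  have hsplit : ∑ k, z k = z i + z j + ∑ k ∈ (univ.erase i).erase j, z k := by
    rw [add_assoc, add_sum_erase _ _ hj, add_sum_erase _ _ (mem_univ i)]
  have hcard : #((univ.erase i).erase j) = Fintype.card ι - 2 := by
    rw [card_erase_of_mem hj, card_erase_of_mem (mem_univ i), card_univ, Nat.sub_sub]
  have hrest : ‖∑ k ∈ (univ.erase i).erase j, z k‖ ≤ Fintype.card ι - 2 := by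
    calc _ ≤ ∑ k ∈ (univ.erase i).erase j, ‖z k‖ := norm_sum_le _ _
      _ ≤ #((univ.erase i).erase j) • (1 : ℝ) := sum_le_card_nsmul _ _ _ fun k _ => hz k
      _ = Fintype.card ι - 2 := by
        rw [hcard, nsmul_one, Nat.cast_sub]; · norm_num
        exact Fintype.one_lt_card_iff.2 ⟨i, j, hij⟩
  rw [hsplit] at h
  linarith [norm_add_le (z i + z j) (∑ k ∈ (univ.erase i).erase j, z k)]

lemma norm_le_of_tendsto_average {E : Type*} [NormedAddCommGroup E] [NormedSpace ℝ E]
    {f : ℝ → E} {L : E} {C : ℝ}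
    (hf : Tendsto (fun T : ℝ => T⁻¹ • ∫ y in (0)..T, f y) atTop (𝓝 L))
    (hC : ∀ y, 0 ≤ y → ‖f y‖ ≤ C) : ‖L‖ ≤ C := by
  refine le_of_tendsto hf.norm ?_
  filter_upwards [eventually_gt_atTop 0] with T hT
  have hint : ‖∫ y in (0)..T, f y‖ ≤ C * |T - 0| :=
    intervalIntegral.norm_integral_le_of_norm_le_const fun y hy =>
      hC y (Set.uIoc_of_le hT.le ▸ hy).1.le
  rw [norm_smul, norm_inv, Real.norm_of_nonneg hT.le, inv_mul_le_iff₀ hT, mul_comm]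
  rwa [sub_zero, abs_of_pos hT] at hint

lemma tendsto_average_exp (ω φ : ℝ) :
    Tendsto (fun T : ℝ => T⁻¹ • ∫ y in (0)..T, exp (↑(ω * y - φ) * I)) atTop
      (𝓝 (if ω = 0 then exp (↑(-φ) * I) else 0)) := by
  split_ifs with hω
  · refine tendsto_const_nhds.congr' ?_
    filter_upwards [eventually_ne_atTop 0] with T hT
    simp [hω, inv_mul_cancel_left₀ (ofReal_ne_zero.2 hT)]
  have hωI : (ω : ℂ) * I ≠ 0 := mul_ne_zero (ofReal_ne_zero.2 hω) I_ne_zero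
  set F : ℝ → ℂ := fun y => exp (↑(ω * y - φ) * I) / (ω * I)
  have hF : ∀ y, HasDerivAt F (exp (↑(ω * y - φ) * I)) y := fun y => by
    have := ((((hasDerivAt_id y).const_mul ω).sub_const φ).ofReal_comp.mul_const I).cexp.div_const
      ((ω : ℂ) * I)
    exact this.congr_deriv (by rw [id, mul_one, mul_div_assoc, div_self hωI, mul_one])
  have hnormF : ∀ y, ‖F y‖ = |ω|⁻¹ := fun y => by
    simp only [F, norm_div, norm_exp_ofReal_mul_I, norm_mul, norm_I, Complex.norm_real,
      Real.norm_eq_abs, mul_one, one_div]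
  have hbound : ∀ T, ‖∫ y in (0)..T, exp (↑(ω * y - φ) * I)‖ ≤ 2 * |ω|⁻¹ := fun T => by
    rw [intervalIntegral.integral_eq_sub_of_hasDerivAt (fun y _ => hF y)
      (Continuous.intervalIntegrable (by fun_prop) _ _)]
    exact (norm_sub_le _ _).trans (by rw [hnormF, hnormF, two_mul])
  refine squeeze_zero_norm' ?_ (by simpa using tendsto_inv_atTop_zero.mul_const (2 * |ω|⁻¹))
  filter_upwards [eventually_gt_atTop 0] with T hT
  rw [norm_smul, norm_inv, Real.norm_of_nonneg hT.le]
  exact mul_le_mul_of_nonneg_left (hbound T) (inv_nonneg.2 hT.le)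

section ExpSum

variable {α : Type*} [Fintype α]

noncomputable def expSum (ω φ : α → ℝ) (y : ℝ) : ℂ := ∑ a, exp (↑(ω a * y - φ a) * I)

lemma tendsto_average_expSum (ω φ : α → ℝ) (hφ : ∀ a, ω a = 0 → (φ a : Real.Angle) = 0) :
    Tendsto (fun T : ℝ => T⁻¹ • ∫ y in (0)..T, expSum ω φ y) atTop
      (𝓝 (#{a | ω a = 0} : ℂ)) := by
  have hlim : ∀ a, (if ω a = 0 then exp (↑(-φ a) * I) else 0) = if ω a = 0 then 1 else 0 :=
    fun a => by
      split_ifs with h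
      · rw [exp_ofReal_mul_I_eq_toCircle, Real.Angle.coe_neg, hφ a h, neg_zero,
          Real.Angle.toCircle_zero, Circle.coe_one]
      · rfl
  have hsum : ∀ T : ℝ, T⁻¹ • ∫ y in (0)..T, expSum ω φ y
      = ∑ a, T⁻¹ • ∫ y in (0)..T, exp (↑(ω a * y - φ a) * I) := fun T => by
    rw [← smul_sum, ← intervalIntegral.integral_finsetSum fun a _ =>
      Continuous.intervalIntegrable (by fun_prop) _ _]
    rfl
  simp_rw [hsum, natCast_card_filter, ← hlim]
  exact tendsto_finsetSum _ fun a _ => tendsto_average_exp (ω a) (φ a)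

lemma ofReal_norm_expSum_sq (ω φ : α → ℝ) (y : ℝ) :
    ((‖expSum ω φ y‖ ^ 2 : ℝ) : ℂ)
      = expSum (fun p : α × α => ω p.1 - ω p.2) (fun p => φ p.1 - φ p.2) y := by
  rw [← normSq_eq_norm_sq, ← mul_conj, expSum, expSum, map_sum, sum_mul_sum,
    Fintype.sum_prod_type]
  refine sum_congr rfl fun a _ => sum_congr rfl fun b _ => ?_
  rw [← exp_conj, ← Complex.exp_add]
  congr 1
  simp only [map_mul, conj_ofReal, conj_I]
  push_cast
  ring

lemma card_pairs_le_sq_of_norm_expSum_le (ω φ : α → ℝ)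
    (hφ : ∀ a b, ω a = ω b → ((φ a - φ b : ℝ) : Real.Angle) = 0) {B : ℝ}
    (hB : ∀ y, 0 ≤ y → ‖expSum ω φ y‖ ≤ B) :
    (#{p : α × α | ω p.1 = ω p.2} : ℝ) ≤ B ^ 2 := by
  have hlim := tendsto_average_expSum (fun p : α × α => ω p.1 - ω p.2) (fun p => φ p.1 - φ p.2)
    fun p hp => hφ p.1 p.2 (sub_eq_zero.1 hp)
  simp_rw [sub_eq_zero, ← ofReal_norm_expSum_sq] at hlim
  have := norm_le_of_tendsto_average hlim fun y hy => by
    rw [norm_real, Real.norm_of_nonneg (sq_nonneg _)]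
    exact pow_le_pow_left₀ (norm_nonneg _) (hB y hy) 2
  rwa [Complex.norm_natCast] at this

end ExpSum

lemma card_sq_le_card_mul_card_pairs {α β : Type*} [Fintype α] [Fintype β] [DecidableEq β]
    (f : α → β) : Fintype.card α ^ 2 ≤ Fintype.card β * #{p : α × α | f p.1 = f p.2} := by
  have hfib : #{p : α × α | f p.1 = f p.2} = ∑ b, #{a | f a = b} ^ 2 := by
    rw [card_eq_sum_card_fiberwise (f := fun p => f p.1) (t := univ) fun _ _ =>
      mem_coe.2 (mem_univ _)]
    refine sum_congr rfl fun b _ => ?_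
    rw [sq, ← card_product]
    congr 1
    ext p
    simp only [mem_filter, mem_univ, true_and, mem_product]
    constructor
    · rintro ⟨h, rfl⟩; exact ⟨rfl, h.symm⟩
    · rintro ⟨h1, h2⟩; exact ⟨h1.trans h2.symm, h1⟩
  calc Fintype.card α ^ 2 = (∑ b, #{a | f a = b}) ^ 2 := by
        rw [← card_univ, card_eq_sum_card_fiberwise fun _ _ => mem_coe.2 (mem_univ (f _))]
    _ ≤ Fintype.card β * ∑ b, #{a | f a = b} ^ 2 := sq_sum_le_card_mul_sum_sq
    _ = Fintype.card β * #{p : α × α | f p.1 = f p.2} := by rw [hfib]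

lemma sum_comp_eq_sum_card_smul {α ι M : Type*} [Fintype α] [Fintype ι] [DecidableEq ι]
    [AddCommMonoid M] (a : α → ι) (f : ι → M) : ∑ j, f (a j) = ∑ r, #{j | a j = r} • f r := by
  rw [← sum_fiberwise univ a]
  refine sum_congr rfl fun r _ => ?_
  rw [sum_congr rfl fun j hj => congrArg f (mem_filter.1 hj).2, sum_const]

lemma le_of_forall_pow_le_mul_pow {A B : ℝ} (n : ℕ) (hB : 0 ≤ B)
    (h : ∀ k : ℕ, A ^ k ≤ B ^ k * (k + 1) ^ n) : A ≤ B := by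
  by_contra! hBA
  rcases hB.eq_or_lt with rfl | hB
  · linarith [h 1]
  have hc : 1 < A / B := (one_lt_div hB).2 hBA
  have hc0 : 0 < A / B := one_pos.trans hc
  have hck : ∀ k : ℕ, (A / B) ^ k ≤ (k + 1) ^ n := fun k => by
    rw [div_pow, div_le_iff₀ (pow_pos hB k), mul_comm]
    exact h k
  have hlim := (tendsto_pow_const_div_const_pow_of_one_lt n hc).comp (tendsto_add_atTop_nat 1)
  obtain ⟨k, hk⟩ := (hlim.eventually (gt_mem_nhds (inv_pos.2 hc0))).exists
  rw [Function.comp_apply, Nat.cast_succ, pow_succ, ← div_div, inv_eq_one_div,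
    div_lt_div_iff_of_pos_right hc0, div_lt_one (pow_pos hc0 k)] at hk
  linarith [hck k]

section

variable {ι : Type*} [Fintype ι]

lemma expSum_pow (θ ζ : ι → ℝ) (y : ℝ) (k : ℕ) :
    expSum θ ζ y ^ k = expSum (fun a : Fin k → ι => ∑ j, θ (a j)) (fun a => ∑ j, ζ (a j)) y := by
  rw [expSum, Fintype.sum_pow]
  refine sum_congr rfl fun a _ => ?_
  rw [← Complex.exp_sum, ← sum_mul]
  push_cast
  rw [sum_sub_distrib, sum_mul]

lemma card_pow_sq_le_mul_card_pairs (θ : ι → ℝ) (k : ℕ) :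
    (Fintype.card ι ^ k) ^ 2 ≤ (k + 1) ^ Fintype.card ι
      * #{p : (Fin k → ι) × (Fin k → ι) | ∑ j, θ (p.1 j) = ∑ j, θ (p.2 j)} := by
  classical
  let v : (Fin k → ι) → ι → Fin (k + 1) := fun a r =>
    ⟨#{j | a j = r}, Nat.lt_succ_of_le ((card_filter_le _ _).trans (card_fin k).le)⟩
  calc (Fintype.card ι ^ k) ^ 2 = Fintype.card (Fin k → ι) ^ 2 := by
        rw [Fintype.card_fun, Fintype.card_fin]
    _ ≤ Fintype.card (ι → Fin (k + 1)) * #{p : (Fin k → ι) × (Fin k → ι) | v p.1 = v p.2} :=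
        card_sq_le_card_mul_card_pairs v
    _ ≤ _ := by
        rw [Fintype.card_fun, Fintype.card_fin]
        refine Nat.mul_le_mul_left _ (card_le_card (monotone_filter_right _ fun p _ hp => ?_))
        simp only [sum_comp_eq_sum_card_smul _ θ]
        exact sum_congr rfl fun r _ => by rw [show #{j | p.1 j = r} = #{j | p.2 j = r} from
          congrArg Fin.val (congrFun hp r)]

def RespectsIntRelations (θ ζ : ι → ℝ) : Prop :=
  ∀ ℓ : ι → ℤ, ∑ r, (ℓ r : ℝ) * θ r = 0 → ((∑ r, (ℓ r : ℝ) * ζ r : ℝ) : Real.Angle) = 0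

variable {θ ζ : ι → ℝ}

lemma RespectsIntRelations.coe_sum_sub_sum_eq_zero (h : RespectsIntRelations θ ζ) {κ : Type*}
    [Fintype κ] {a b : κ → ι} (hab : ∑ j, θ (a j) = ∑ j, θ (b j)) :
    ((∑ j, ζ (a j) - ∑ j, ζ (b j) : ℝ) : Real.Angle) = 0 := by
  classical
  set ℓ : ι → ℤ := fun r => #{j | a j = r} - #{j | b j = r}
  have hℓ : ∀ g : ι → ℝ, ∑ r, (ℓ r : ℝ) * g r = ∑ j, g (a j) - ∑ j, g (b j) := fun g => by
    simp only [ℓ, sum_comp_eq_sum_card_smul _ g, nsmul_eq_mul, ← sum_sub_distrib]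
    push_cast
    exact sum_congr rfl fun r _ => by ring
  exact hℓ ζ ▸ h ℓ (by rw [hℓ θ, hab, sub_self])

theorem RespectsIntRelations.card_le_of_norm_expSum_le (h : RespectsIntRelations θ ζ) {B : ℝ}
    (hB : ∀ y, 0 ≤ y → ‖expSum θ ζ y‖ ≤ B) : (Fintype.card ι : ℝ) ≤ B := by
  have hB0 : 0 ≤ B := (norm_nonneg _).trans (hB 0 le_rfl)
  refine (pow_le_pow_iff_left₀ (Nat.cast_nonneg _) hB0 two_ne_zero).1 <|
    le_of_forall_pow_le_mul_pow (Fintype.card ι) (sq_nonneg B) fun k => ?_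
  have hpairs := card_pairs_le_sq_of_norm_expSum_le _ _
    (fun a b hab => h.coe_sum_sub_sum_eq_zero hab) fun y hy => by
      rw [← expSum_pow, norm_pow]
      exact pow_le_pow_left₀ (norm_nonneg _) (hB y hy) k
  have hcount : ((Fintype.card ι ^ k) ^ 2 : ℝ) ≤ (k + 1) ^ Fintype.card ι
      * #{p : (Fin k → ι) × (Fin k → ι) | ∑ j, θ (p.1 j) = ∑ j, θ (p.2 j)} := by
    exact_mod_cast card_pow_sq_le_mul_card_pairs θ k
  calc ((Fintype.card ι : ℝ) ^ 2) ^ k = (Fintype.card ι ^ k) ^ 2 := by ring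
    _ ≤ _ := hcount
    _ ≤ (k + 1) ^ Fintype.card ι * (B ^ k) ^ 2 := by gcongr
    _ = (B ^ 2) ^ k * (k + 1) ^ Fintype.card ι := by ring

theorem RespectsIntRelations.exists_card_sub_lt_norm_expSum (h : RespectsIntRelations θ ζ)
    {δ : ℝ} (hδ : 0 < δ) : ∃ y, 0 ≤ y ∧ Fintype.card ι - δ < ‖expSum θ ζ y‖ := by
  by_contra! hlt
  linarith [h.card_le_of_norm_expSum_le hlt]

lemma RespectsIntRelations.optionElim (h : RespectsIntRelations θ ζ) :
    RespectsIntRelations (fun o : Option ι => o.elim 0 θ) (fun o => o.elim 0 ζ) := by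
  intro ℓ hℓ
  simp only [Fintype.sum_option, Option.elim, mul_zero, zero_add] at hℓ ⊢
  exact h _ hℓ

theorem RespectsIntRelations.exists_forall_norm_lt (h : RespectsIntRelations θ ζ) {ε : ℝ}
    (hε : 0 < ε) : ∃ y, 0 ≤ y ∧ ∀ r, ‖((θ r * y - ζ r : ℝ) : Real.Angle)‖ < ε := by
  obtain ⟨y, hy, hnorm⟩ :=
    h.optionElim.exists_card_sub_lt_norm_expSum (δ := (ε / π) ^ 2) (by positivity)
  refine ⟨y, hy, fun r => ?_⟩
  have hadd := two_sub_lt_norm_add_of_card_sub_lt_norm_sum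
    (fun o => (norm_exp_ofReal_mul_I _).le) (Option.some_ne_none r) hnorm
  simp only [Option.elim, zero_mul, sub_zero, ofReal_zero, Complex.exp_zero,
    exp_ofReal_mul_I_eq_toCircle] at hadd
  have := norm_sq_lt_of_two_sub_lt_norm_toCircle_add_one _ hadd
  rw [div_pow, mul_div_cancel₀ _ (by positivity)] at this
  exact (pow_lt_pow_iff_left₀ (norm_nonneg _) hε.le two_ne_zero).1 this

theorem RespectsIntRelations.of_forall_exists_norm_lt
    (happ : ∀ ε, 0 < ε → ∃ y, 0 ≤ y ∧ ∀ r, ‖((θ r * y - ζ r : ℝ) : Real.Angle)‖ < ε) :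
    RespectsIntRelations θ ζ := by
  intro ℓ hℓ
  set v : ℝ → ι → Real.Angle := fun y r => ((θ r * y - ζ r : ℝ) : Real.Angle)
  set χ : (ι → Real.Angle) → Real.Angle := fun a => ∑ r, ℓ r • a r
  have hχ : Continuous χ := by fun_prop
  have hχv : ∀ y, χ (v y) = -((∑ r, (ℓ r : ℝ) * ζ r : ℝ) : Real.Angle) := fun y => by
    have hsum : χ (v y) = ((∑ r, (ℓ r : ℝ) * (θ r * y - ζ r) : ℝ) : Real.Angle) := by
      simp only [χ, v, ← Real.Angle.coe_zsmul, zsmul_eq_mul]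
      exact (map_sum Real.Angle.coeHom _ _).symm
    rw [hsum, ← Real.Angle.coe_neg]
    simp only [mul_sub, sum_sub_distrib, ← mul_assoc, ← sum_mul, hℓ, zero_mul, zero_sub]
  have h0 : (0 : ι → Real.Angle) ∈ closure (Set.range v) :=
    Metric.mem_closure_iff.2 fun ε hε =>
      let ⟨y, _, hy⟩ := happ ε hε
      ⟨v y, ⟨y, rfl⟩, by rwa [dist_zero_left, pi_norm_lt_iff hε]⟩
  have := (isClosed_singleton.preimage hχ).closure_subset_iff.2
    (Set.range_subset_iff.2 hχv) h0
  simpa [χ, eq_comm (a := (0 : Real.Angle))] using this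

theorem respectsIntRelations_iff :
    RespectsIntRelations θ ζ ↔
      ∀ ε, 0 < ε → ∃ y, 0 ≤ y ∧ ∀ r, ‖((θ r * y - ζ r : ℝ) : Real.Angle)‖ < ε :=
  ⟨fun h _ hε => h.exists_forall_norm_lt hε, .of_forall_exists_norm_lt⟩

end

end Kronecker

/-- **Kronecker's theorem.** For reals `θ_0,…,θ_d` and `ζ_0,…,ζ_d`:
every system `|θ_r y − ζ_r| < ε (mod 2π)` has a solution `y ≥ 0` for every `ε > 0`
iff every integer relation `∑ ℓ_r θ_r = 0` implies `∑ ℓ_r ζ_r ∈ 2πℤ`. -/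
theorem kronecker_theorem (d : ℕ) (θ ζ : Fin (d + 1) → ℝ) :
    (∀ ε : ℝ, 0 < ε → ∃ y : ℝ, 0 ≤ y ∧
      ∀ r : Fin (d + 1), ∃ k : ℤ, |θ r * y - ζ r - 2 * π * k| < ε) ↔
    (∀ ℓ : Fin (d + 1) → ℤ,
      (∑ r, (ℓ r : ℝ) * θ r) = 0 → ∃ m : ℤ, (∑ r, (ℓ r : ℝ) * ζ r) = 2 * π * m) := by
  simp_rw [Kronecker.exists_int_abs_sub_lt_iff, Kronecker.exists_int_eq_two_pi_mul_iff]
  exact Kronecker.respectsIntRelations_iff.symm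
end

section
/- Let A be a real symmetric n×n matrix with spectral decomposition A = Σ_{r=0}^d θ_r E_r (θ_r the distinct eigenvalues, E_r the orthogonal spectral projections). Then for all indices a, b the Cesàro time-average lim_{T→∞} (1/T) ∫_0^T |(exp(itA))_{ab}|² dt exists and equals Σ_{r=0}^d ((E_r)_{ab})². In matrix form: lim_{T→∞} (1/T) ∫_0^T exp(itA) ∘ exp(−itA) dt = Σ_{r=0}^d E_r ∘ E_r, where ∘ denotes the entrywise (Hadamard) product. -/
open Matrix Filter

/-!
The spectral idempotents form a complete orthogonal family, so `c ↦ ∑ r, c r • E r` is a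
continuous ring homomorphism out of `Fin (d + 1) → ℂ`; it commutes with `exp`, which gives
`exp (z • A) = ∑ r, exp (z θ_r) • E r`. Hence
`|exp(itA)_{ab}|² = ∑_{r,s} (E r)_{ab} (E s)_{ab} cos((θ_r - θ_s) t)`, and since the Cesàro mean
of `cos (c t)` tends to `0` for `c ≠ 0` and is `1` for `c = 0`, injectivity of `θ` leaves only
the diagonal terms `r = s`.
-/

open NormedSpace

namespace CompleteOrthogonalIdempotents

variable {ι 𝕂 R : Type*} [Fintype ι] {e : ι → R}

def piAlgHom [CommSemiring 𝕂] [Semiring R] [Algebra 𝕂 R] (he : CompleteOrthogonalIdempotents e) :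
    (ι → 𝕂) →ₐ[𝕂] R where
  toFun c := ∑ i, c i • e i
  map_one' := by simpa using he.complete
  map_mul' c c' := by
    classical
    simp only [Finset.sum_mul_sum, smul_mul_smul_comm, he.mul_eq, smul_ite, smul_zero,
      Finset.sum_ite_eq, Finset.mem_univ, if_true, Pi.mul_apply]
  map_zero' := by simp
  map_add' c c' := by simp [add_smul, Finset.sum_add_distrib]
  commutes' k := by simp [Algebra.algebraMap_eq_smul_one, ← Finset.smul_sum, he.complete]

@[simp]
theorem piAlgHom_apply [CommSemiring 𝕂] [Semiring R] [Algebra 𝕂 R]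
    (he : CompleteOrthogonalIdempotents e) (c : ι → 𝕂) : he.piAlgHom c = ∑ i, c i • e i :=
  rfl

theorem exp_sum_smul_s5 [NormedField 𝕂] [NormedAlgebra ℚ 𝕂] [CompleteSpace 𝕂] [NormedRing R]
    [NormedAlgebra 𝕂 R] [Algebra ℚ R] (he : CompleteOrthogonalIdempotents e) (c : ι → 𝕂) :
    exp (∑ i, c i • e i) = ∑ i, exp (c i) • e i := by
  have hcont : Continuous (he.piAlgHom (𝕂 := 𝕂)) :=
    continuous_finsetSum _ fun i _ => (continuous_apply i).smul continuous_const
  simpa [Pi.exp_def] using (map_exp _ hcont c).symm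

end CompleteOrthogonalIdempotents

theorem Matrix.exp_smul_map_ofReal_of_eq_sum_smul {m ι : Type*} [Fintype m] [DecidableEq m]
    [Fintype ι] {A : Matrix m m ℝ} {E : ι → Matrix m m ℝ} (hE : CompleteOrthogonalIdempotents E)
    {θ : ι → ℝ} (hA : A = ∑ r, θ r • E r) (z : ℂ) :
    exp (z • A.map Complex.ofReal) = ∑ r, Complex.exp (z * θ r) • (E r).map Complex.ofReal := by
  have hE' := hE.map (Complex.ofRealHom.mapMatrix (m := m))
  have hzA : z • A.map Complex.ofReal = ∑ r, (z * θ r) • (E r).map Complex.ofReal := by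
    ext i j
    simp [hA, Matrix.sum_apply, Finset.mul_sum, mul_assoc]
  rw [hzA, Complex.exp_eq_exp_ℂ]
  open scoped Norms.Operator in exact hE'.exp_sum_smul_s5 _

theorem Complex.sq_norm_sum_exp_mul_I_mul_ofReal {ι : Type*} (s : Finset ι) (x w : ι → ℝ) :
    ‖∑ i ∈ s, exp (x i * I) * w i‖ ^ 2 =
      ∑ i ∈ s, ∑ j ∈ s, w i * w j * Real.cos (x i - x j) := by
  have hterm (i j : ι) : exp (x i * I) * w i * starRingEnd ℂ (exp (x j * I) * w j) =
      exp ((x i - x j : ℝ) * I) * (w i * w j : ℝ) := by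
    rw [map_mul, ← exp_conj, map_mul, conj_ofReal, conj_ofReal, conj_I]
    push_cast
    rw [mul_neg, exp_neg, sub_mul, exp_sub]
    ring
  rw [← ofReal_re (_ ^ 2), ofReal_pow, ← mul_conj', map_sum, Finset.sum_mul_sum, re_sum]
  simp only [hterm, re_sum, re_mul_ofReal, exp_ofReal_mul_I_re]
  refine Finset.sum_congr rfl fun i _ => Finset.sum_congr rfl fun j _ => ?_
  ring

theorem tendsto_average_integral_cos_mul (c : ℝ) :
    Tendsto (fun T : ℝ => 1 / T * ∫ t in (0:ℝ)..T, Real.cos (c * t)) atTop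
      (nhds (if c = 0 then 1 else 0)) := by
  split_ifs with hc
  · refine tendsto_const_nhds.congr' ?_
    filter_upwards [eventually_ne_atTop 0] with T hT
    simp [hc, hT]
  · have hint (T : ℝ) : ∫ t in (0:ℝ)..T, Real.cos (c * t) = Real.sin (c * T) / c := by
      simp [intervalIntegral.integral_comp_mul_left Real.cos hc, integral_cos, div_eq_inv_mul]
    simp only [hint, one_div]
    refine tendsto_inv_atTop_zero.zero_mul_isBoundedUnder_le
      (isBoundedUnder_of ⟨|c|⁻¹, fun T => ?_⟩)
    simp only [Function.comp_apply, Real.norm_eq_abs, div_eq_mul_inv, abs_mul, abs_inv]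
    exact mul_le_of_le_one_left (by positivity) (Real.abs_sin_le_one _)

theorem tendsto_average_integral_sum_mul_cos {ι : Type*} (s : Finset ι) (w c : ι → ℝ) :
    Tendsto (fun T : ℝ => 1 / T * ∫ t in (0:ℝ)..T, ∑ i ∈ s, w i * Real.cos (c i * t)) atTop
      (nhds (∑ i ∈ s with c i = 0, w i)) := by
  have havg (T : ℝ) : 1 / T * ∫ t in (0:ℝ)..T, ∑ i ∈ s, w i * Real.cos (c i * t) =
      ∑ i ∈ s, w i * (1 / T * ∫ t in (0:ℝ)..T, Real.cos (c i * t)) := by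
    have hintegrable (i : ι) :
        IntervalIntegrable (fun t => w i * Real.cos (c i * t)) MeasureTheory.volume 0 T :=
      (by fun_prop : Continuous _).intervalIntegrable _ _
    rw [intervalIntegral.integral_finsetSum fun i _ => hintegrable i, Finset.mul_sum]
    simp only [intervalIntegral.integral_const_mul]
    exact Finset.sum_congr rfl fun i _ => by ring
  simp only [havg, Finset.sum_filter]
  refine tendsto_finsetSum _ fun i _ => ?_
  simpa using (tendsto_average_integral_cos_mul (c i)).const_mul (w i)

theorem average_mixing_matrix_eq_sum_hadamard_squares_general
    {n d : ℕ} (A : Matrix (Fin n) (Fin n) ℝ)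
    (θ : Fin (d + 1) → ℝ) (hθ : Function.Injective θ)
    (E : Fin (d + 1) → Matrix (Fin n) (Fin n) ℝ)
    (hspec : A = ∑ r, θ r • E r)
    (hidem : ∀ r, E r * E r = E r)
    (horth : ∀ r s, r ≠ s → E r * E s = 0)
    (hsum : ∑ r, E r = 1) :
    ∀ a b : Fin n,
      Tendsto (fun T : ℝ => (1 / T) *
          ∫ t in (0:ℝ)..T, ‖
            ((NormedSpace.exp ((Complex.I * (t : ℂ)) • A.map Complex.ofReal)) a b)‖ ^ 2)
        atTop (nhds (∑ r, (E r a b) ^ 2)) := by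
  intro a b
  have hE : CompleteOrthogonalIdempotents E := ⟨⟨hidem, horth⟩, hsum⟩
  have hentry (t : ℝ) :
      ‖exp ((Complex.I * (t : ℂ)) • A.map Complex.ofReal) a b‖ ^ 2 =
        ∑ p ∈ Finset.univ ×ˢ Finset.univ,
          E p.1 a b * E p.2 a b * Real.cos ((θ p.1 - θ p.2) * t) := by
    have hnorm :=
      Complex.sq_norm_sum_exp_mul_I_mul_ofReal Finset.univ (fun r => t * θ r) (E · a b)
    rw [Finset.sum_product]
    simp only [exp_smul_map_ofReal_of_eq_sum_smul hE hspec, Matrix.sum_apply,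
      Matrix.smul_apply, map_apply, smul_eq_mul]
    have hexp (r : Fin (d + 1)) : Complex.I * t * θ r = ((t * θ r : ℝ) : ℂ) * Complex.I := by
      push_cast; ring
    simp only [hexp, hnorm]
    refine Finset.sum_congr rfl fun r _ => Finset.sum_congr rfl fun s _ => ?_
    ring_nf
  simp_rw [hentry]
  convert tendsto_average_integral_sum_mul_cos _ _ _ using 2
  rw [Finset.sum_filter, Finset.sum_product]
  refine Finset.sum_congr rfl fun r _ => ?_
  simp [sub_eq_zero, hθ.eq_iff, sq]

/-- For a real symmetric matrix `A = ∑ r, θ r • E r` (spectral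
decomposition), the Cesàro time-average of `|(exp(itA))_{ab}|²` exists and equals
`∑ r, ((E r)_{ab})²`; entrywise this is the matrix identity
`lim (1/T)∫₀ᵀ exp(itA) ∘ exp(−itA) dt = ∑ r, E r ∘ E r`. -/
theorem average_mixing_matrix_eq_sum_hadamard_squares
    {n d : ℕ} (A : Matrix (Fin n) (Fin n) ℝ) (hAsym : Aᵀ = A)
    (θ : Fin (d + 1) → ℝ) (hθ : Function.Injective θ)
    (E : Fin (d + 1) → Matrix (Fin n) (Fin n) ℝ)
    (hspec : A = ∑ r, θ r • E r)
    (hsym : ∀ r, (E r)ᵀ = E r)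
    (hidem : ∀ r, E r * E r = E r)
    (horth : ∀ r s, r ≠ s → E r * E s = 0)
    (hsum : ∑ r, E r = 1)
    (hE0 : ∀ r, E r ≠ 0) :
    ∀ a b : Fin n,
      Tendsto (fun T : ℝ => (1 / T) *
          ∫ t in (0:ℝ)..T, ‖
            ((NormedSpace.exp ((Complex.I * (t : ℂ)) • A.map Complex.ofReal)) a b)‖ ^ 2)
        atTop (nhds (∑ r, (E r a b) ^ 2)) :=
  average_mixing_matrix_eq_sum_hadamard_squares_general A θ hθ E hspec hidem horth hsum
end

section
/- Let A be the adjacency matrix of a finite simple graph G (a symmetric integer matrix), let a, b be vertices, and let ℓ ≥ 1 be an integer. Then the time average lim_{T→∞} (1/T) ∫_0^T |(exp(itA))_{ab}|^{2ℓ} dt exists and is a rational number. -/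
/-!
Diagonalise `A = W diag(λ) W*`. The function `|U(t)_{ab}|^{2ℓ} = (U(t)_{ab} · conj U(t)_{ab})^ℓ`
is again an entry of `exp(itB)`, where `B` is the Kronecker sum of `ℓ` copies of `A` and `ℓ`
copies of `-A`: a rational Hermitian matrix, diagonalised by `W^{⊗ℓ} ⊗ conj(W)^{⊗ℓ}`, with
eigenvalues `λ_{i₁} + ⋯ + λ_{iℓ} - λ_{j₁} - ⋯ - λ_{jℓ}`. Averaging `exp(itμ)` over `[0, T]` kills
every frequency `μ ≠ 0`, so the time average is an entry of the orthogonal projection onto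
`ker B`. That projection is `g(B) / g(0)`, where `charpoly B = X^m g` with `g(0) ≠ 0`, so it is a
rational matrix.
-/

open Matrix Filter Topology Complex Polynomial Unitary
open scoped Kronecker

section conjStarAlgAut

variable {S R J K : Type*} [CommSemiring S] [CommSemiring R] [StarRing R] [Algebra S R]
  [Fintype J] [DecidableEq J] [Fintype K] [DecidableEq K]

theorem Matrix.conjStarAlgAut_diagonal_apply (W : unitary (Matrix J J R)) (e : J → R) (α β : J) :
    conjStarAlgAut S _ W (diagonal e) α β =
      ∑ j, e j * ((W : Matrix J J R) α j * star (W : Matrix J J R) j β) := by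
  rw [conjStarAlgAut_apply, mul_apply]
  exact Finset.sum_congr rfl fun j _ => by rw [mul_diagonal]; ring

def Matrix.unitaryKronecker (W₁ : unitary (Matrix J J R)) (W₂ : unitary (Matrix K K R)) :
    unitary (Matrix (J × K) (J × K) R) :=
  ⟨(W₁ : Matrix J J R) ⊗ₖ (W₂ : Matrix K K R), kronecker_mem_unitary W₁.2 W₂.2⟩

theorem Matrix.conjStarAlgAut_kronecker (W₁ : unitary (Matrix J J R))
    (W₂ : unitary (Matrix K K R)) (X : Matrix J J R) (Y : Matrix K K R) :
    conjStarAlgAut S (Matrix (J × K) (J × K) R) (unitaryKronecker W₁ W₂) (X ⊗ₖ Y) =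
      conjStarAlgAut S _ W₁ X ⊗ₖ conjStarAlgAut S _ W₂ Y := by
  simp only [conjStarAlgAut_apply, unitaryKronecker, star_eq_conjTranspose,
    conjTranspose_kronecker, mul_kronecker_mul]

def Matrix.unitaryMapStar (W : unitary (Matrix J J R)) : unitary (Matrix J J R) :=
  ⟨(W : Matrix J J R).map (starRingEnd R), by
    rw [Unitary.mem_iff, star_eq_conjTranspose,
      ← conjTranspose_map (A := (W : Matrix J J R)) (starRingEnd R) fun _ => rfl,
      ← Matrix.map_mul, ← Matrix.map_mul, ← star_eq_conjTranspose, W.2.1, W.2.2,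
      Matrix.map_one _ (map_zero _) (map_one _)]
    exact ⟨rfl, rfl⟩⟩

theorem Matrix.conjStarAlgAut_unitaryMapStar (W : unitary (Matrix J J R)) (X : Matrix J J R) :
    conjStarAlgAut S _ (unitaryMapStar W) (X.map (starRingEnd R)) =
      (conjStarAlgAut S _ W X).map (starRingEnd R) := by
  simp only [conjStarAlgAut_apply, unitaryMapStar, star_eq_conjTranspose,
    ← conjTranspose_map (A := (W : Matrix J J R)) (starRingEnd R) fun _ => rfl, Matrix.map_mul]

end conjStarAlgAut

theorem Matrix.exp_smul_conjStarAlgAut_diagonal {ι : Type*} [Fintype ι] [DecidableEq ι]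
    (W : unitary (Matrix ι ι ℂ)) (μ : ι → ℂ) (z : ℂ) :
    NormedSpace.exp (z • conjStarAlgAut ℂ _ W (diagonal μ)) =
      conjStarAlgAut ℂ _ W (diagonal fun j => cexp (z * μ j)) := by
  rw [← map_smul, ← diagonal_smul]
  refine (Matrix.exp_units_conj (toUnits W) _).trans ?_
  rw [exp_diagonal, Pi.exp_def]
  simp [exp_eq_exp_ℂ]

theorem Polynomial.aeval_diagonal {R A J : Type*} [CommSemiring R] [CommSemiring A] [Algebra R A]
    [Fintype J] [DecidableEq J] (d : J → A) (p : R[X]) :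
    aeval (diagonal d) p = diagonal fun j => aeval (d j) p := by
  rw [← diagonalAlgHom_apply (R := R), aeval_algHom_apply, aeval_pi_apply]
  rfl

theorem Matrix.exists_map_eq_conjStarAlgAut_diagonal_ite {K L J : Type*} [Field K] [Field L]
    [StarRing L] [DecidableEq L] [Algebra K L] [Fintype J] [DecidableEq J]
    (W : unitary (Matrix J J L)) (μ : J → L) (B : Matrix J J K)
    (hB : conjStarAlgAut L _ W (diagonal μ) = B.map (algebraMap K L)) :
    ∃ P : Matrix J J K, conjStarAlgAut L _ W (diagonal fun j => if μ j = 0 then 1 else 0) =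
      P.map (algebraMap K L) := by
  set φ := conjStarAlgAut K (Matrix J J L) W
  change φ _ = _ at hB
  change ∃ P, φ _ = _
  have hφ (q : K[X]) : φ (diagonal fun j => aeval (μ j) q) = (aeval B q).map (algebraMap K L) := by
    rw [← aeval_diagonal, ← aeval_algHom_apply, hB]
    exact aeval_algHom_apply (Algebra.ofId K L).mapMatrix B q
  have hroot (j : J) : aeval (μ j) B.charpoly = 0 := by
    have h := hφ B.charpoly
    rw [aeval_self_charpoly, Matrix.map_zero _ (map_zero _), map_eq_zero_iff φ φ.injective] at h
    simpa using congrFun (congrFun h j) j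
  -- `g (B) / g 0` is the projection onto `ker B`
  obtain ⟨g, hpg, hg⟩ := B.charpoly.exists_eq_pow_rootMultiplicity_mul_and_not_dvd
    (charpoly_monic B).ne_zero 0
  rw [dvd_iff_isRoot, IsRoot.def] at hg
  have hgμ (j : J) : aeval (μ j) g = algebraMap K L (g.eval 0) * if μ j = 0 then 1 else 0 := by
    split_ifs with hj
    · rw [hj, ← map_zero (algebraMap K L), aeval_algebraMap_apply, coe_aeval_eq_eval, mul_one]
    · have h := hroot j
      rw [hpg, map_mul, map_pow] at h
      simpa [hj] using h
  refine ⟨(g.eval 0)⁻¹ • aeval B g, ?_⟩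
  rw [Matrix.map_smul' _ _ _ (map_mul _), ← hφ, algebraMap_smul, ← map_smul φ]
  congr 1
  ext i j
  by_cases hij : i = j
  · subst hij
    simp [hgμ, Algebra.smul_def, hg]
  · simp [hij]

theorem tendsto_average_cexp_mul_I (μ : ℝ) :
    Tendsto (fun T : ℝ => T⁻¹ • ∫ t in (0 : ℝ)..T, cexp (I * t * μ)) atTop
      (𝓝 (if μ = 0 then 1 else 0)) := by
  split_ifs with hμ
  · refine tendsto_const_nhds.congr' ?_
    filter_upwards [eventually_ne_atTop 0] with T hT
    simp [hμ, hT]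
  · have hc : (μ * I : ℂ) ≠ 0 := mul_ne_zero (ofReal_ne_zero.2 hμ) I_ne_zero
    have hint (T : ℝ) :
        ∫ t in (0 : ℝ)..T, cexp (I * t * μ) = (cexp (μ * I * T) - 1) / (μ * I) := by
      simp_rw [show ∀ t : ℝ, I * t * μ = μ * I * t from fun t => by ring]
      simp [integral_exp_mul_complex hc]
    simp_rw [hint]
    refine tendsto_inv_atTop_zero.zero_smul_isBoundedUnder_le
      (isBoundedUnder_of ⟨2 / ‖(μ * I : ℂ)‖, fun T => ?_⟩)
    rw [Function.comp_apply, norm_div]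
    gcongr
    calc ‖cexp (μ * I * T) - 1‖ ≤ ‖cexp (μ * I * T)‖ + ‖(1 : ℂ)‖ := norm_sub_le _ _
      _ = 2 := by
        rw [show (μ * I * T : ℂ) = ((μ * T : ℝ) : ℂ) * I by push_cast; ring,
          norm_exp_ofReal_mul_I]
        norm_num

/-- `f t = (exp (i t B)) α β` for a Hermitian matrix `B = W diag(μ) W*` with rational entries,
recorded through its diagonalisation. -/
def IsRatWalkEntry (f : ℝ → ℂ) : Prop :=
  ∃ (J : Type) (_ : Fintype J) (_ : DecidableEq J) (W : unitary (Matrix J J ℂ)) (μ : J → ℝ)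
    (α β : J),
    (∃ B : Matrix J J ℚ,
      conjStarAlgAut ℂ _ W (diagonal fun j => (μ j : ℂ)) = B.map (algebraMap ℚ ℂ)) ∧
    ∀ t : ℝ, f t = conjStarAlgAut ℂ _ W (diagonal fun j => cexp (I * t * μ j)) α β

namespace IsRatWalkEntry

theorem one : IsRatWalkEntry 1 :=
  ⟨Unit, inferInstance, inferInstance, 1, 0, (), (), ⟨0, by simp⟩, fun t => by simp⟩

theorem mul {f g : ℝ → ℂ} (hf : IsRatWalkEntry f) (hg : IsRatWalkEntry g) :
    IsRatWalkEntry (f * g) := by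
  obtain ⟨J, _, _, W₁, μ₁, α₁, β₁, ⟨B₁, hB₁⟩, hf⟩ := hf
  obtain ⟨K, _, _, W₂, μ₂, α₂, β₂, ⟨B₂, hB₂⟩, hg⟩ := hg
  refine ⟨J × K, inferInstance, inferInstance, unitaryKronecker W₁ W₂, fun j => μ₁ j.1 + μ₂ j.2,
    (α₁, α₂), (β₁, β₂), ⟨B₁ ⊗ₖ 1 + 1 ⊗ₖ B₂, ?_⟩, fun t => ?_⟩
  · have hsum : diagonal (fun j : J × K => ((μ₁ j.1 + μ₂ j.2 : ℝ) : ℂ)) =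
        diagonal (fun j => (μ₁ j : ℂ)) ⊗ₖ 1 + 1 ⊗ₖ diagonal (fun k => (μ₂ k : ℂ)) := by
      ext ⟨i, k⟩ ⟨j, l⟩
      by_cases i = j <;> by_cases k = l <;> simp_all [one_apply]
    rw [hsum, map_add, conjStarAlgAut_kronecker, conjStarAlgAut_kronecker, map_one, map_one,
      hB₁, hB₂]
    ext ⟨i, k⟩ ⟨j, l⟩
    simp only [Matrix.add_apply, kroneckerMap_apply, map_apply, one_apply, map_add, map_mul,
      apply_ite (algebraMap ℚ ℂ), map_one, map_zero]
  · have hexp : (diagonal fun j : J × K => cexp (I * t * ((μ₁ j.1 + μ₂ j.2 : ℝ) : ℂ))) =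
        (diagonal fun j => cexp (I * t * μ₁ j)) ⊗ₖ (diagonal fun k => cexp (I * t * μ₂ k)) := by
      rw [diagonal_kronecker_diagonal]
      simp only [ofReal_add, mul_add, exp_add]
    rw [Pi.mul_apply, hf, hg, hexp, conjStarAlgAut_kronecker, kroneckerMap_apply]

theorem pow {f : ℝ → ℂ} (hf : IsRatWalkEntry f) (n : ℕ) : IsRatWalkEntry (f ^ n) := by
  induction n with
  | zero => simpa using one
  | succ n ih => simpa [pow_succ] using ih.mul hf

theorem star {f : ℝ → ℂ} (hf : IsRatWalkEntry f) : IsRatWalkEntry (star f) := by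
  obtain ⟨J, _, _, W, μ, α, β, ⟨B, hB⟩, hf⟩ := hf
  refine ⟨J, inferInstance, inferInstance, unitaryMapStar W, fun j => -μ j, α, β, ⟨-B, ?_⟩,
    fun t => ?_⟩
  · have hneg : diagonal (fun j => ((-μ j : ℝ) : ℂ)) =
        -(diagonal fun j => (μ j : ℂ)).map (starRingEnd ℂ) := by
      simp
    rw [hneg, map_neg, conjStarAlgAut_unitaryMapStar, hB]
    ext i j
    simp
  · have hconj : diagonal (fun j => cexp (I * t * ((-μ j : ℝ) : ℂ))) =
        (diagonal fun j => cexp (I * t * μ j)).map (starRingEnd ℂ) := by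
      rw [diagonal_map (map_zero _)]
      congr 1
      funext j
      rw [← Complex.exp_conj]
      simp
    rw [Pi.star_apply, hf, hconj, conjStarAlgAut_unitaryMapStar]
    rfl

theorem exists_tendsto_average {f : ℝ → ℂ} (hf : IsRatWalkEntry f) :
    ∃ q : ℚ, Tendsto (fun T : ℝ => T⁻¹ • ∫ t in (0 : ℝ)..T, f t) atTop (𝓝 q) := by
  obtain ⟨J, _, _, W, μ, α, β, ⟨B, hB⟩, hf⟩ := hf
  obtain ⟨P, hP⟩ := exists_map_eq_conjStarAlgAut_diagonal_ite W (fun j => (μ j : ℂ)) B hB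
  set c : J → ℂ := fun j => (W : Matrix J J ℂ) α j * Star.star (W : Matrix J J ℂ) j β
  have hP' : (P α β : ℂ) = ∑ j, (if μ j = 0 then 1 else 0) * c j := by
    rw [← eq_ratCast (algebraMap ℚ ℂ), ← map_apply (f := algebraMap ℚ ℂ), ← hP,
      conjStarAlgAut_diagonal_apply]
    simp [c]
  have hint (T : ℝ) : T⁻¹ • ∫ t in (0 : ℝ)..T, f t =
      ∑ j, (T⁻¹ • ∫ t in (0 : ℝ)..T, cexp (I * t * μ j)) * c j := by
    simp_rw [hf, conjStarAlgAut_diagonal_apply]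
    rw [intervalIntegral.integral_finsetSum fun j _ =>
      (by fun_prop : Continuous _).intervalIntegrable _ _, Finset.smul_sum]
    simp_rw [intervalIntegral.integral_mul_const, smul_mul_assoc]
    rfl
  refine ⟨P α β, ?_⟩
  simp_rw [hint, hP']
  exact tendsto_finsetSum _ fun j _ => (tendsto_average_cexp_mul_I (μ j)).mul_const _

end IsRatWalkEntry

theorem isRatWalkEntry_exp_apply {ι : Type} [Fintype ι] [DecidableEq ι] (B : Matrix ι ι ℚ)
    (hB : B.IsSymm) (a b : ι) :
    IsRatWalkEntry fun t => NormedSpace.exp ((I * t) • B.map (algebraMap ℚ ℂ)) a b := by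
  have hH : (B.map (algebraMap ℚ ℂ)).IsHermitian := by
    ext i j
    simp [hB.apply j i]
  refine ⟨ι, inferInstance, inferInstance, hH.eigenvectorUnitary, hH.eigenvalues, a, b,
    ⟨B, hH.spectral_theorem.symm⟩, fun t => ?_⟩
  have h := congrArg (fun M : Matrix ι ι ℂ => NormedSpace.exp ((I * t) • M) a b)
    hH.spectral_theorem
  rw [exp_smul_conjStarAlgAut_diagonal] at h
  simpa using h

theorem even_moments_rational_general
    {n : ℕ} (G : SimpleGraph (Fin n)) [DecidableRel G.Adj]
    (A : Matrix (Fin n) (Fin n) ℝ) (hA : A = G.adjMatrix ℝ)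
    (a b : Fin n) (ℓ : ℕ) :
    ∃ q : ℚ, Tendsto (fun T : ℝ => (1 / T) *
        ∫ t in (0:ℝ)..T, (‖
          (NormedSpace.exp ((Complex.I * (t : ℂ)) • A.map Complex.ofReal)) a b‖) ^ (2 * ℓ))
      atTop (nhds (q : ℝ)) := by
  set U : ℝ → ℂ := fun t => NormedSpace.exp ((I * t) • A.map ofReal) a b
  have hA' : A.map ofReal = (G.adjMatrix ℚ).map (algebraMap ℚ ℂ) := by
    ext i j
    simp [hA, SimpleGraph.adjMatrix_apply, apply_ite]
  have hU : IsRatWalkEntry U := by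
    simpa only [U, hA'] using isRatWalkEntry_exp_apply _ (G.isSymm_adjMatrix) a b
  obtain ⟨q, hq⟩ := ((hU.mul hU.star).pow ℓ).exists_tendsto_average
  have hnorm (t : ℝ) : ((U * star U) ^ ℓ) t = ((‖U t‖ ^ (2 * ℓ) : ℝ) : ℂ) := by
    simp [pow_mul, mul_conj, normSq_eq_norm_sq]
  have havg (T : ℝ) : T⁻¹ • ∫ t in (0 : ℝ)..T, ((U * star U) ^ ℓ) t =
      ((1 / T * ∫ t in (0 : ℝ)..T, ‖U t‖ ^ (2 * ℓ) : ℝ) : ℂ) := by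
    simp_rw [hnorm, intervalIntegral.integral_ofReal]
    simp
  simp_rw [havg, ← ofReal_ratCast, tendsto_ofReal_iff] at hq
  exact ⟨q, hq⟩

/-- For the adjacency matrix `A` of a finite simple graph, vertices
`a`, `b` and an integer `ℓ ≥ 1`, the time average
`lim_{T→∞} (1/T) ∫₀ᵀ |(exp(itA))_{ab}|^{2ℓ} dt` exists and is a rational number. -/
theorem even_moments_rational
    {n : ℕ} (G : SimpleGraph (Fin n)) [DecidableRel G.Adj]
    (A : Matrix (Fin n) (Fin n) ℝ) (hA : A = G.adjMatrix ℝ)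
    (a b : Fin n) (ℓ : ℕ) (hℓ : 1 ≤ ℓ) :
    ∃ q : ℚ, Tendsto (fun T : ℝ => (1 / T) *
        ∫ t in (0:ℝ)..T, (‖
          (NormedSpace.exp ((Complex.I * (t : ℂ)) • A.map Complex.ofReal)) a b‖) ^ (2 * ℓ))
      atTop (nhds (q : ℝ)) :=
  even_moments_rational_general G A hA a b ℓ
end

section
/- Let A be the adjacency matrix of a finite simple graph G and let a, b be any (possibly equal) vertices. Then the closure in ℂ of the set {(exp(itA))_{ab} : t ∈ [0, ∞)} is invariant under complex conjugation. -/
/-!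
Write `U t = exp (i t A)`. As `A` is real, conjugating the entries of `U t` gives `U (-t)`. As `A`
is also symmetric, `t ↦ U t` is a one-parameter subgroup of the compact unitary group, and in a
compact group the closure of a submonoid is a subgroup; so `U (-t) = (U t)⁻¹` is a limit of values
`U s` with `s ≥ 0`. Thus conjugation, a continuous involution of `ℂ`, maps the curve into its
closure, hence maps that closure onto itself.
-/

open Matrix Set Complex ComplexConjugate

theorem Function.Involutive.image_closure_eq_of_mapsTo {X : Type*} [TopologicalSpace X]
    {f : X → X} (hinv : Function.Involutive f) (hf : Continuous f) {S : Set X}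
    (hS : MapsTo f S (closure S)) : f '' closure S = closure S := by
  have hsub : f '' closure S ⊆ closure S :=
    (image_closure_subset_closure_image hf).trans (closure_minimal hS.image_subset isClosed_closure)
  exact hsub.antisymm fun z hz => ⟨f z, hsub ⟨z, hz, rfl⟩, hinv z⟩

theorem Submonoid.inv_mem_closure {G : Type*} [Group G] [TopologicalSpace G] [CompactSpace G]
    [IsTopologicalGroup G] (S : Submonoid G) {x : G} (hx : x ∈ S) :
    x⁻¹ ∈ _root_.closure (S : Set G) := by
  rw [← S.closure_eq, closure_submonoidClosure_eq_closure_subgroupClosure]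
  exact _root_.subset_closure (inv_mem (Subgroup.subset_closure hx))

namespace AddChar

variable {A G : Type*} [AddCommGroup A] [LinearOrder A] [IsOrderedAddMonoid A] [Group G]

def nonnegSubmonoid (ψ : AddChar A G) : Submonoid G where
  carrier := ψ '' Ici 0
  mul_mem' := by
    rintro _ _ ⟨s, hs, rfl⟩ ⟨t, ht, rfl⟩
    exact ⟨s + t, add_nonneg hs ht, ψ.map_add_eq_mul s t⟩
  one_mem' := ⟨0, self_mem_Ici, ψ.map_zero_eq_one⟩

theorem mem_closure_image_Ici_zero [TopologicalSpace G] [CompactSpace G] [IsTopologicalGroup G]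
    (ψ : AddChar A G) (t : A) : ψ t ∈ closure (ψ '' Ici 0) := by
  rcases le_total 0 t with ht | ht
  · exact subset_closure ⟨t, ht, rfl⟩
  · have h := ψ.nonnegSubmonoid.inv_mem_closure (x := ψ (-t)) ⟨-t, neg_nonneg.2 ht, rfl⟩
    rwa [map_neg_eq_inv, inv_inv] at h

end AddChar

namespace Matrix

variable {n 𝕜 : Type*} [Fintype n] [DecidableEq n] [RCLike 𝕜]

theorem isCompact_unitaryGroup : IsCompact (unitaryGroup n 𝕜 : Set (Matrix n n 𝕜)) :=
  (isCompact_univ_pi fun _ => isCompact_univ_pi fun _ => isCompact_closedBall (0 : 𝕜) 1)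
    |>.of_isClosed_subset (isClosed_unitary (R := Matrix n n 𝕜)) fun _ hU i _ j _ => by
      simpa using entry_norm_bound_of_unitary hU i j

instance : CompactSpace (unitaryGroup n 𝕜) :=
  isCompact_iff_compactSpace.mp isCompact_unitaryGroup

theorem exp_mem_unitaryGroup_of_conjTranspose_eq_neg {X : Matrix n n 𝕜} (hX : Xᴴ = -X) :
    NormedSpace.exp X ∈ unitaryGroup n 𝕜 := by
  rw [Unitary.mem_iff, star_eq_conjTranspose, ← exp_conjTranspose, hX,
    ← exp_add_of_commute _ _ (Commute.refl X).neg_left,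
    ← exp_add_of_commute _ _ (Commute.refl X).neg_right]
  simp

noncomputable def IsHermitian.unitaryEvolution {M : Matrix n n ℂ} (hM : M.IsHermitian) :
    AddChar ℝ (unitaryGroup n ℂ) where
  toFun t := ⟨NormedSpace.exp ((I * t) • M), exp_mem_unitaryGroup_of_conjTranspose_eq_neg <| by
    rw [conjTranspose_smul, hM.eq]; simp⟩
  map_zero_eq_one' := Subtype.ext <| by simp
  map_add_eq_mul' s t := Subtype.ext <| by
    simp only [ofReal_add, mul_add, add_smul]
    exact exp_add_of_commute _ _ (((Commute.refl M).smul_left (I * s)).smul_right (I * t))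

@[simp]
theorem IsHermitian.coe_unitaryEvolution_apply {M : Matrix n n ℂ} (hM : M.IsHermitian) (t : ℝ) :
    (hM.unitaryEvolution t : Matrix n n ℂ) = NormedSpace.exp ((I * t) • M) :=
  rfl

theorem IsHermitian.exp_I_mul_smul_mem_closure {M : Matrix n n ℂ} (hM : M.IsHermitian) (t : ℝ) :
    NormedSpace.exp ((I * t) • M) ∈
      closure ((fun s : ℝ => NormedSpace.exp ((I * s) • M)) '' Ici 0) := by
  have := image_closure_subset_closure_image continuous_subtype_val
    ⟨_, hM.unitaryEvolution.mem_closure_image_Ici_zero t, rfl⟩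
  simpa [image_image] using this

theorem IsHermitian.conj_exp_smul_apply {M : Matrix n n ℂ} (hH : M.IsHermitian) (hS : M.IsSymm)
    (c : ℂ) (a b : n) :
    conj (NormedSpace.exp (c • M) a b) = NormedSpace.exp (conj c • M) a b := by
  calc conj (NormedSpace.exp (c • M) a b)
      = (NormedSpace.exp (c • M))ᴴ b a := by simp [conjTranspose_apply]
    _ = NormedSpace.exp (conj c • M) b a := by
      rw [← exp_conjTranspose, conjTranspose_smul, hH.eq]; rfl
    _ = (NormedSpace.exp (conj c • M))ᵀ a b := rfl
    _ = NormedSpace.exp (conj c • M) a b := by rw [← exp_transpose, transpose_smul, hS.eq]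

theorem IsSymm.conj_image_closure_exp_I_mul_smul_apply {A : Matrix n n ℝ} (hA : A.IsSymm)
    (a b : n) :
    conj '' closure {z : ℂ | ∃ t : ℝ, 0 ≤ t ∧ z = NormedSpace.exp ((I * t) • A.map ofReal) a b} =
      closure {z : ℂ | ∃ t : ℝ, 0 ≤ t ∧ z = NormedSpace.exp ((I * t) • A.map ofReal) a b} := by
  have hH : (A.map ofReal).IsHermitian :=
    (isHermitian_iff_isSymm.2 hA).map ofReal fun x => (conj_ofReal x).symm
  refine Function.Involutive.image_closure_eq_of_mapsTo conj_conj continuous_conj ?_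
  rintro _ ⟨t, -, rfl⟩
  have hconj : conj (I * t) = I * ↑(-t) := by simp
  rw [hH.conj_exp_smul_apply (hA.map ofReal), hconj]
  have := image_closure_subset_closure_image (continuous_id.matrix_elem a b)
    ⟨_, hH.exp_I_mul_smul_mem_closure (-t), rfl⟩
  simpa [image_image, Set.image, eq_comm] using this

end Matrix

/-- For the adjacency matrix `A` of a finite simple graph and any
(possibly equal) vertices `a`, `b`, the closure in `ℂ` of the curve
`{(exp(itA))_{ab} : t ≥ 0}` is invariant under complex conjugation. -/
theorem closure_curve_conj_invariant
    {n : ℕ} (G : SimpleGraph (Fin n)) [DecidableRel G.Adj]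
    (A : Matrix (Fin n) (Fin n) ℝ) (hA : A = G.adjMatrix ℝ)
    (a b : Fin n) :
    (starRingEnd ℂ) '' closure
        {z : ℂ | ∃ t : ℝ, 0 ≤ t ∧
          z = (NormedSpace.exp ((Complex.I * (t : ℂ)) • A.map Complex.ofReal)) a b} =
      closure
        {z : ℂ | ∃ t : ℝ, 0 ≤ t ∧
          z = (NormedSpace.exp ((Complex.I * (t : ℂ)) • A.map Complex.ofReal)) a b} := by
  subst hA
  exact G.isSymm_adjMatrix.conj_image_closure_exp_I_mul_smul_apply a b
end

section
/- Let w_1, …, w_k be real numbers that are linearly independent over ℚ, let f^0, …, f^d ∈ ℤ^k be integer vectors, and set θ_r = Σ_{ℓ=1}^k f^r_ℓ w_ℓ for r = 0, …, d. Let c_0, …, c_d be complex numbers and let n ≥ 1 be an integer such that Σ_{ℓ=1}^k f^r_ℓ ≡ 1 (mod n) for every r. Then the closure in ℂ of the set {Σ_{r=0}^d c_r e^{itθ_r} : t ∈ [0, ∞)} is invariant under multiplication by e^{2πi/n}. -/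
/-!
By Kronecker's theorem, rational independence of `w` makes the curve `t ↦ (e^{i t w_ℓ})_ℓ`,
`t ≥ 0`, dense in the torus. The sum `∑_r c_r e^{i t θ_r}` is the Laurent polynomial
`P(u) = ∑_r c_r ∏_ℓ u_ℓ ^ f^r_ℓ` evaluated along this curve, and the congruence
`∑_ℓ f^r_ℓ ≡ 1 (mod n)` gives `P(ζ u) = ζ P(u)` for `ζ = e^{2πi/n}`. So `ζ` times a value on the
curve is a limit of values on the curve, and since `ζ ^ n = 1` the closure is invariant.

Kronecker's theorem comes from the product `φ(s) = ∏_ℓ ((1 + cos (s w_ℓ - p_ℓ)) / 2) ^ M`. It is a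
trigonometric polynomial all of whose frequencies except the constant one are nonzero (rational
independence again), so its mean over `[0, T]` tends to its constant term
`(binom(2M, M) / 4^M)^k ≥ (2M)^(-k)`. Hence `φ(s)` exceeds half of that for arbitrarily large `s`,
and for large `M` this forces every factor close to `1`, i.e. `s w_ℓ ≈ p_ℓ` modulo `2π`.
-/

open Real Finset

noncomputable def fejerFactor (M : ℕ) (y : ℝ) : ℝ := ((1 + cos y) / 2) ^ M

lemma fejerFactor_nonneg (M : ℕ) (y : ℝ) : 0 ≤ fejerFactor M y :=
  pow_nonneg (by linarith [neg_one_le_cos y]) M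

lemma fejerFactor_le_one (M : ℕ) (y : ℝ) : fejerFactor M y ≤ 1 :=
  pow_le_one₀ (by linarith [neg_one_le_cos y]) (by linarith [cos_le_one y])

-- With `u = exp (y I)` one has `(1 + cos y) / 2 = u⁻¹ (u + 1)² / 4`; expand `(u + 1) ^ (2M)`.
lemma ofReal_fejerFactor (M : ℕ) (y : ℝ) :
    (fejerFactor M y : ℂ) = ∑ j ∈ range (2 * M + 1),
      ((Nat.choose (2 * M) j / 4 ^ M : ℝ) : ℂ) *
        Complex.exp (↑(((j : ℝ) - M) * y) * Complex.I) := by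
  set u := Complex.exp (↑y * Complex.I)
  have hu : u ≠ 0 := Complex.exp_ne_zero _
  have hbase : (((1 + cos y) / 2 : ℝ) : ℂ) = u⁻¹ * (u + 1) ^ 2 / 4 := by
    push_cast
    rw [Complex.cos, neg_mul, Complex.exp_neg]
    field_simp
    ring
  have hterm : ∀ j : ℕ, Complex.exp (↑(((j : ℝ) - M) * y) * Complex.I) = u ^ j * (u ^ M)⁻¹ := by
    intro j
    rw [← Complex.exp_nat_mul, ← Complex.exp_nat_mul, ← Complex.exp_neg, ← Complex.exp_add]
    push_cast
    ring_nf
  calc (fejerFactor M y : ℂ) = (u ^ M)⁻¹ / 4 ^ M * (u + 1) ^ (2 * M) := by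
        rw [fejerFactor, Complex.ofReal_pow, hbase, div_pow, mul_pow, inv_pow, ← pow_mul]
        ring
    _ = _ := by
        rw [add_pow, mul_sum]
        refine sum_congr rfl fun j _ => ?_
        rw [hterm]
        push_cast
        ring

lemma norm_intervalIntegral_exp_mul_I_le {α : ℝ} (hα : α ≠ 0) (β T : ℝ) :
    ‖∫ s in (0 : ℝ)..T, Complex.exp (↑(s * α - β) * Complex.I)‖ ≤ 2 / |α| := by
  have hαI : (α : ℂ) * Complex.I ≠ 0 := mul_ne_zero (by exact_mod_cast hα) Complex.I_ne_zero
  have hsplit : ∀ s : ℝ, Complex.exp (↑(s * α - β) * Complex.I)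
      = Complex.exp (↑(-β) * Complex.I) * Complex.exp ((α * Complex.I) * s) := fun s => by
    rw [← Complex.exp_add]; push_cast; ring_nf
  simp only [hsplit, intervalIntegral.integral_const_mul, integral_exp_mul_complex hαI, norm_mul,
    Complex.norm_exp_ofReal_mul_I, one_mul, norm_div, Complex.norm_I, Complex.norm_real,
    Real.norm_eq_abs, mul_one]
  have hunit : ∀ x : ℝ, ‖Complex.exp (α * Complex.I * x)‖ = 1 := fun x => by
    rw [show (α : ℂ) * Complex.I * x = ↑(α * x) * Complex.I by push_cast; ring]
    exact Complex.norm_exp_ofReal_mul_I _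
  gcongr
  calc _ ≤ _ := norm_sub_le _ _
    _ = 2 := by rw [hunit, hunit]; norm_num

section Fejer

variable {ι : Type*} [Fintype ι] (M : ℕ)

noncomputable def fejerProduct (w p : ι → ℝ) (s : ℝ) : ℝ := ∏ ℓ, fejerFactor M (s * w ℓ - p ℓ)

noncomputable def fejerCoeff (g : ι → ℕ) : ℝ := ∏ ℓ, (Nat.choose (2 * M) (g ℓ) / 4 ^ M : ℝ)

noncomputable def fejerFreq (v : ι → ℝ) (g : ι → ℕ) : ℝ := ∑ ℓ, ((g ℓ : ℝ) - M) * v ℓ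

lemma ofReal_fejerProduct [DecidableEq ι] (w p : ι → ℝ) (s : ℝ) :
    (fejerProduct M w p s : ℂ) = ∑ g ∈ Fintype.piFinset fun _ : ι => range (2 * M + 1),
      (fejerCoeff M g : ℂ) *
        Complex.exp (↑(s * fejerFreq M w g - fejerFreq M p g) * Complex.I) := by
  simp only [fejerProduct, Complex.ofReal_prod, ofReal_fejerFactor, prod_univ_sum]
  refine sum_congr rfl fun g _ => ?_
  rw [prod_mul_distrib, ← Complex.exp_sum, fejerCoeff, Complex.ofReal_prod, fejerFreq, fejerFreq]
  congr 2
  push_cast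
  rw [mul_sum, ← sum_sub_distrib, sum_mul]
  exact sum_congr rfl fun ℓ _ => by ring

lemma fejerProduct_le_one (w p : ι → ℝ) (s : ℝ) : fejerProduct M w p s ≤ 1 :=
  prod_le_one (fun _ _ => fejerFactor_nonneg ..) (fun _ _ => fejerFactor_le_one ..)

lemma fejerProduct_le_fejerFactor (w p : ι → ℝ) (s : ℝ) (ℓ : ι) :
    fejerProduct M w p s ≤ fejerFactor M (s * w ℓ - p ℓ) := by
  classical
  rw [fejerProduct, ← mul_prod_erase _ _ (mem_univ ℓ)]
  exact mul_le_of_le_one_right (fejerFactor_nonneg ..)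
    (prod_le_one (fun _ _ => fejerFactor_nonneg ..) (fun _ _ => fejerFactor_le_one ..))

lemma continuous_fejerProduct (w p : ι → ℝ) : Continuous (fejerProduct M w p) := by
  unfold fejerProduct fejerFactor
  fun_prop

lemma fejerCoeff_nonneg (g : ι → ℕ) : 0 ≤ fejerCoeff M g :=
  prod_nonneg fun _ _ => by positivity

lemma fejerCoeff_const :
    fejerCoeff M (fun _ : ι => M) = (Nat.centralBinom M / 4 ^ M) ^ Fintype.card ι := by
  rw [fejerCoeff, prod_const, card_univ, Nat.centralBinom_eq_two_mul_choose]

lemma fejerCoeff_const_pos : 0 < fejerCoeff M (fun _ : ι => M) := by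
  rw [fejerCoeff_const]
  have := Nat.centralBinom_pos M
  positivity

lemma fejerFreq_const (v : ι → ℝ) : fejerFreq M v (fun _ => M) = 0 := by
  simp [fejerFreq]

lemma fejerFreq_ne_zero {w : ι → ℝ} (hw : LinearIndependent ℚ w) {g : ι → ℕ}
    (hg : g ≠ fun _ => M) : fejerFreq M w g ≠ 0 := by
  intro h
  refine hg (funext fun ℓ => ?_)
  have key := Fintype.linearIndependent_iff.mp hw (fun ℓ => (g ℓ : ℚ) - M) ?_ ℓ
  · exact_mod_cast sub_eq_zero.mp key
  · rw [← h, fejerFreq]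
    exact sum_congr rfl fun ℓ _ => by rw [Rat.smul_def]; push_cast; rfl

-- Only the constant term of the trigonometric polynomial `fejerProduct` grows linearly.
lemma exists_le_integral_fejerProduct {w : ι → ℝ}
    (hw : LinearIndependent ℚ w) (p : ι → ℝ) :
    ∃ B, ∀ T, fejerCoeff M (fun _ : ι => M) * T - B ≤ ∫ s in (0 : ℝ)..T, fejerProduct M w p s := by
  classical
  set G := Fintype.piFinset fun _ : ι => range (2 * M + 1)
  set g₀ : ι → ℕ := fun _ => M
  have hg₀ : g₀ ∈ G := by simp [G, g₀]; omega
  set term := fun (g : ι → ℕ) (s : ℝ) =>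
    (fejerCoeff M g : ℂ) * Complex.exp (↑(s * fejerFreq M w g - fejerFreq M p g) * Complex.I)
  have hterm_bound : ∀ g ∈ G.erase g₀, ∀ T,
      ‖∫ s in (0 : ℝ)..T, term g s‖ ≤ fejerCoeff M g * (2 / |fejerFreq M w g|) := by
    intro g hg T
    rw [intervalIntegral.integral_const_mul, norm_mul, Complex.norm_real,
      Real.norm_of_nonneg (fejerCoeff_nonneg M g)]
    exact mul_le_mul_of_nonneg_left
      (norm_intervalIntegral_exp_mul_I_le (fejerFreq_ne_zero M hw (ne_of_mem_erase hg)) _ T)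
      (fejerCoeff_nonneg M g)
  refine ⟨∑ g ∈ G.erase g₀, fejerCoeff M g * (2 / |fejerFreq M w g|), fun T => ?_⟩
  set R := ∑ g ∈ G.erase g₀, ∫ s in (0 : ℝ)..T, term g s
  have hint : ((∫ s in (0 : ℝ)..T, fejerProduct M w p s : ℝ) : ℂ) = ↑(fejerCoeff M g₀ * T) + R := by
    have hexp : ∀ s, (fejerProduct M w p s : ℂ) = ∑ g ∈ G, term g s := ofReal_fejerProduct M w p
    rw [← intervalIntegral.integral_ofReal, funext hexp,
      intervalIntegral.integral_finsetSum fun g _ =>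
        (by fun_prop : Continuous (term g)).intervalIntegrable _ _,
      ← add_sum_erase G _ hg₀]
    congr 1
    simp [term, g₀, fejerFreq_const, mul_comm]
  have hre := congrArg Complex.re hint
  simp only [Complex.ofReal_re, Complex.add_re] at hre
  have hR : ‖R‖ ≤ ∑ g ∈ G.erase g₀, fejerCoeff M g * (2 / |fejerFreq M w g|) :=
    norm_sum_le_of_le _ fun g hg => hterm_bound g hg T
  linarith [neg_abs_le R.re, Complex.abs_re_le_norm R]

end Fejer

lemma exists_ge_half_of_le_integral {φ : ℝ → ℝ} (hφ : Continuous φ) (hφ1 : ∀ s, φ s ≤ 1)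
    {a B : ℝ} (ha : 0 < a) (hB : ∀ T, a * T - B ≤ ∫ s in (0 : ℝ)..T, φ s) (T₀ : ℝ) :
    ∃ s ≥ T₀, a / 2 ≤ φ s := by
  by_contra! hlt
  obtain ⟨T₁, hT₀T₁, hT₁⟩ : ∃ T₁, T₀ ≤ T₁ ∧ 0 ≤ T₁ := ⟨max T₀ 0, le_max_left _ _, le_max_right _ _⟩
  set T := T₁ + 2 * (T₁ + |B| + 1) / a
  have hT₁T : T₁ ≤ T := le_add_of_nonneg_right (by positivity)
  have hinit : ∫ s in (0 : ℝ)..T₁, φ s ≤ T₁ := by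
    simpa using intervalIntegral.integral_mono_on (μ := MeasureTheory.volume) hT₁
      (hφ.intervalIntegrable _ _) (continuous_const.intervalIntegrable _ _) fun s _ => hφ1 s
  have htail : ∫ s in T₁..T, φ s ≤ (T - T₁) * a / 2 := by
    simpa using intervalIntegral.integral_mono_on (μ := MeasureTheory.volume) hT₁T
      (hφ.intervalIntegrable _ _) ((continuous_const (y := a / 2)).intervalIntegrable _ _)
      fun s hs => (hlt s (hT₀T₁.trans hs.1)).le
  have hsplit := intervalIntegral.integral_add_adjacent_intervals (μ := MeasureTheory.volume)
    (hφ.intervalIntegrable 0 T₁) (hφ.intervalIntegrable T₁ T)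
  have haT : a * T = a * T₁ + 2 * (T₁ + |B| + 1) := by
    simp only [T]; field_simp
  linarith [hB T, le_abs_self B, mul_nonneg ha.le hT₁]

lemma exists_pow_lt_half_fejerCoeff (ι : Type*) [Fintype ι] {δ : ℝ} (hδ0 : 0 < δ) (hδ1 : δ ≤ 1) :
    ∃ M : ℕ, (1 - δ) ^ M < fejerCoeff M (fun _ : ι => M) / 2 := by
  set k := Fintype.card ι
  have hlim : Filter.Tendsto (fun M : ℕ => 2 ^ k * ((M : ℝ) ^ k * (1 - δ) ^ M)) Filter.atTop
      (nhds 0) := by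
    simpa using (tendsto_pow_const_mul_const_pow_of_abs_lt_one k
      (abs_lt.mpr ⟨by linarith, by linarith⟩)).const_mul (2 ^ k)
  obtain ⟨M, hM, hM1⟩ := ((hlim.eventually_lt_const (by norm_num : (0 : ℝ) < 1 / 2)).and
    (Filter.eventually_ge_atTop 1)).exists
  refine ⟨M, ?_⟩
  have hMpos : (0 : ℝ) < 2 * M := by positivity
  have hcentral : ((2 * M : ℝ) ^ k)⁻¹ ≤ fejerCoeff M (fun _ : ι => M) := by
    rw [fejerCoeff_const, ← inv_pow]
    gcongr
    have h4 : (4 : ℝ) ^ M ≤ 2 * M * M.centralBinom := by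
      exact_mod_cast Nat.four_pow_le_two_mul_self_mul_centralBinom M hM1
    rw [inv_le_iff_one_le_mul₀ hMpos, div_mul_eq_mul_div, le_div_iff₀ (by positivity)]
    linarith
  have hsmall : (1 - δ) ^ M * (2 * M : ℝ) ^ k < 1 / 2 := by
    rw [mul_pow]; linarith
  have hpos : (0 : ℝ) < (2 * M) ^ k := by positivity
  calc (1 - δ) ^ M = (1 - δ) ^ M * (2 * M : ℝ) ^ k * ((2 * M : ℝ) ^ k)⁻¹ := by field_simp
    _ < 1 / 2 * ((2 * M : ℝ) ^ k)⁻¹ := mul_lt_mul_of_pos_right hsmall (inv_pos.2 hpos)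
    _ ≤ _ := by linarith

lemma norm_exp_mul_I_sub_exp_mul_I_sq (x y : ℝ) :
    ‖Complex.exp (↑x * Complex.I) - Complex.exp (↑y * Complex.I)‖ ^ 2 = 2 - 2 * cos (x - y) := by
  rw [Complex.sq_norm, Complex.normSq_apply]
  simp only [Complex.sub_re, Complex.sub_im, Complex.exp_ofReal_mul_I_re,
    Complex.exp_ofReal_mul_I_im, cos_sub]
  nlinarith [sin_sq_add_cos_sq x, sin_sq_add_cos_sq y]

-- Kronecker's simultaneous approximation theorem, for a continuous time parameter.
theorem exists_ge_forall_norm_exp_mul_I_sub_lt {ι : Type*} [Fintype ι] {w : ι → ℝ}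
    (hw : LinearIndependent ℚ w) (p : ι → ℝ) (T₀ : ℝ) {ε : ℝ} (hε : 0 < ε) :
    ∃ s ≥ T₀, ∀ ℓ,
      ‖Complex.exp (↑(s * w ℓ) * Complex.I) - Complex.exp (↑(p ℓ) * Complex.I)‖ < ε := by
  set δ := min (ε ^ 2 / 4) 1
  obtain ⟨M, hM⟩ := exists_pow_lt_half_fejerCoeff ι (δ := δ) (by positivity) (min_le_right _ _)
  obtain ⟨B, hB⟩ := exists_le_integral_fejerProduct M hw p
  obtain ⟨s, hs, hφ⟩ := exists_ge_half_of_le_integral (continuous_fejerProduct M w p)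
    (fejerProduct_le_one M w p) (fejerCoeff_const_pos M) hB T₀
  refine ⟨s, hs, fun ℓ => ?_⟩
  have hpow : (1 - δ) ^ M < fejerFactor M (s * w ℓ - p ℓ) :=
    hM.trans_le (hφ.trans (fejerProduct_le_fejerFactor M w p s ℓ))
  have hbase : 1 - δ < (1 + cos (s * w ℓ - p ℓ)) / 2 :=
    lt_of_pow_lt_pow_left₀ M (by linarith [neg_one_le_cos (s * w ℓ - p ℓ)]) hpow
  rw [← sq_lt_sq₀ (norm_nonneg _) hε.le, norm_exp_mul_I_sub_exp_mul_I_sq]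
  linarith [min_le_left (ε ^ 2 / 4) 1]

noncomputable def torusCurve {ι : Type*} (w : ι → ℝ) (s : ℝ) : ι → ℂ :=
  fun ℓ => Complex.exp (↑(s * w ℓ) * Complex.I)

theorem exp_mul_I_mem_closure_torusCurve {ι : Type*} [Fintype ι] {w : ι → ℝ}
    (hw : LinearIndependent ℚ w) (p : ι → ℝ) (T₀ : ℝ) :
    (fun ℓ => Complex.exp (↑(p ℓ) * Complex.I)) ∈ closure (torusCurve w '' Set.Ici T₀) := by
  refine Metric.mem_closure_iff.mpr fun ε hε => ?_
  obtain ⟨s, hs, hclose⟩ := exists_ge_forall_norm_exp_mul_I_sub_lt hw p T₀ hε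
  refine ⟨torusCurve w s, Set.mem_image_of_mem _ hs, (dist_pi_lt_iff hε).mpr fun ℓ => ?_⟩
  rw [dist_comm, dist_eq_norm]
  exact hclose ℓ

theorem prod_zpow_eq_zpow_sum {ι G₀ : Type*} [CommGroupWithZero G₀] (s : Finset ι) (f : ι → ℤ)
    {a : G₀} (ha : a ≠ 0) : ∏ i ∈ s, a ^ f i = a ^ ∑ i ∈ s, f i := by
  classical
  induction s using Finset.induction_on with
  | empty => simp
  | insert i s hi ih => rw [prod_insert hi, sum_insert hi, zpow_add₀ ha, ih]

section Laurent

variable {ι κ : Type*} [Fintype ι] [Fintype κ] (c : κ → ℂ) (f : κ → ι → ℤ)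

noncomputable def laurentEval (u : ι → ℂ) : ℂ := ∑ r, c r * ∏ ℓ, u ℓ ^ f r ℓ

theorem laurentEval_smul {ζ : ℂ} (hζ0 : ζ ≠ 0) {N : ℕ} (hζ : ζ ^ N = 1)
    (hf : ∀ r, ∑ ℓ, f r ℓ ≡ 1 [ZMOD N]) (u : ι → ℂ) :
    laurentEval c f (ζ • u) = ζ * laurentEval c f u := by
  rw [laurentEval, laurentEval, mul_sum]
  refine sum_congr rfl fun r _ => ?_
  obtain ⟨q, hq⟩ := (hf r).symm.dvd
  have hsum : ∑ ℓ, f r ℓ = 1 + N * q := by linarith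
  simp only [Pi.smul_apply, smul_eq_mul, mul_zpow, prod_mul_distrib,
    prod_zpow_eq_zpow_sum _ _ hζ0, hsum, zpow_add₀ hζ0, zpow_one, zpow_mul, zpow_natCast, hζ,
    one_zpow, mul_one]
  ring

theorem laurentEval_torusCurve (w : ι → ℝ) (t : ℝ) :
    laurentEval c f (torusCurve w t)
      = ∑ r, c r * Complex.exp (Complex.I * t * ↑(∑ ℓ, (f r ℓ : ℝ) * w ℓ)) := by
  refine sum_congr rfl fun r _ => ?_
  simp only [torusCurve, ← Complex.exp_int_mul, ← Complex.exp_sum]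
  congr 2
  push_cast
  rw [mul_sum]
  exact sum_congr rfl fun ℓ _ => by ring

theorem continuousAt_laurentEval {u : ι → ℂ} (hu : ∀ ℓ, u ℓ ≠ 0) :
    ContinuousAt (laurentEval c f) u := by
  refine tendsto_finsetSum _ fun r _ => (tendsto_finsetProd _ fun ℓ _ => ?_).const_mul (c r)
  exact (continuous_apply ℓ).continuousAt.zpow₀ (f r ℓ) (Or.inl (hu ℓ))

end Laurent

open Pointwise in
theorem smul_closure_eq_of_pow_eq_one {M X : Type*} [Monoid M] [TopologicalSpace X] [MulAction M X]
    [ContinuousConstSMul M X] {g : M} {N : ℕ} (hN : N ≠ 0) (hg : g ^ N = 1) {S : Set X}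
    (hS : g • S ⊆ closure S) : g • closure S = closure S := by
  have hsub : g • closure S ⊆ closure S :=
    (smul_closure_subset g S).trans (closure_minimal hS isClosed_closure)
  have hpow : ∀ n : ℕ, g ^ n • closure S ⊆ closure S := by
    intro n
    induction n with
    | zero => simp
    | succ n ih => rw [pow_succ', mul_smul]; exact (Set.smul_set_mono ih).trans hsub
  refine subset_antisymm hsub ?_
  calc closure S = g ^ N • closure S := by rw [hg, one_smul]
    _ = g • g ^ (N - 1) • closure S := by
        rw [← mul_smul, ← pow_succ', Nat.sub_add_cancel (by omega)]
    _ ⊆ g • closure S := Set.smul_set_mono (hpow _)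

/-- If `w_1,…,w_k` are rationally independent reals,
`θ_r = ∑_ℓ f^r_ℓ w_ℓ` with integer vectors `f^r`, and `∑_ℓ f^r_ℓ ≡ 1 (mod n)` for all
`r`, then the closure of `{∑_r c_r e^{itθ_r} : t ≥ 0}` in `ℂ` is invariant under
multiplication by `e^{2πi/n}`. -/
theorem exp_sum_curve_rotational_symmetry
    {k d : ℕ} (w : Fin k → ℝ) (hw : LinearIndependent ℚ w)
    (f : Fin (d + 1) → Fin k → ℤ)
    (θ : Fin (d + 1) → ℝ) (hθ : ∀ r, θ r = ∑ ℓ, (f r ℓ : ℝ) * w ℓ)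
    (c : Fin (d + 1) → ℂ) (N : ℕ) (hN : 1 ≤ N)
    (hf : ∀ r, (∑ ℓ, f r ℓ) ≡ 1 [ZMOD (N : ℤ)]) :
    (fun z : ℂ => Complex.exp (2 * π * Complex.I / N) * z) '' closure
        {z : ℂ | ∃ t : ℝ, 0 ≤ t ∧
          z = ∑ r, c r * Complex.exp (Complex.I * (t : ℂ) * (θ r : ℂ))} =
      closure
        {z : ℂ | ∃ t : ℝ, 0 ≤ t ∧
          z = ∑ r, c r * Complex.exp (Complex.I * (t : ℂ) * (θ r : ℂ))} := by
  set ζ := Complex.exp (2 * π * Complex.I / N)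
  have hζN : ζ ^ N = 1 := (Complex.isPrimitiveRoot_exp N (by omega)).pow_eq_one
  have hS : {z : ℂ | ∃ t : ℝ, 0 ≤ t ∧ z = ∑ r, c r * Complex.exp (Complex.I * t * θ r)}
      = laurentEval c f '' (torusCurve w '' Set.Ici 0) := by
    ext z
    simp [laurentEval_torusCurve, hθ, eq_comm]
  rw [hS]
  refine smul_closure_eq_of_pow_eq_one (by omega) hζN ?_
  rintro _ ⟨_, ⟨_, ⟨t, -, rfl⟩, rfl⟩, rfl⟩
  have hrot : ζ • torusCurve w t = fun ℓ => Complex.exp (↑(t * w ℓ + 2 * π / N) * Complex.I) := by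
    ext ℓ
    rw [Pi.smul_apply, smul_eq_mul, torusCurve, ← Complex.exp_add]
    congr 1
    push_cast
    ring
  simp only [smul_eq_mul]
  rw [← laurentEval_smul c f (Complex.exp_ne_zero _) hζN hf, hrot]
  exact mem_closure_image (continuousAt_laurentEval c f fun _ => Complex.exp_ne_zero _)
    (exp_mul_I_mem_closure_torusCurve hw _ 0)
end

section
/- Let w_1, …, w_k be real numbers that are linearly independent over ℚ, let f^0, …, f^d ∈ ℤ^k be integer vectors, and set θ_r = Σ_{ℓ=1}^k f^r_ℓ w_ℓ for r = 0, …, d. Then the closure in (S¹)^{d+1} of the curve {(e^{itθ_0}, …, e^{itθ_d}) : t ∈ [0, ∞)} equals the set {(e^{i⟨f^0, z⟩}, …, e^{i⟨f^d, z⟩}) : z ∈ ℝ^k}, where ⟨f^r, z⟩ = Σ_{ℓ=1}^k f^r_ℓ z_ℓ and S¹ is the unit circle in ℂ. -/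
/-!
Divide all angles by `2π`. The curve is then the image of the ray `{t • w : t ≥ 0}` of the linear
flow on the torus `ℝᵏ/ℤᵏ` under the continuous map `x ↦ (e^{2πi⟨f^r, x⟩})_r`, and the right-hand
side is the image of the whole torus, so it suffices that the ray is dense in the torus.

Kronecker: if the closure `H` of the line `ℝ • w` were a proper subgroup of the torus, its preimage
`S ⊆ ℝᵏ` would be a proper closed subgroup containing `ℤᵏ`. Modulo the largest subspace contained in
`S`, the image of `S` has no lines, hence is discrete, hence a lattice; a coordinate for a basis of
that lattice is a nonzero functional that is integral on `ℤᵏ` and vanishes on `w`, i.e. an integer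
relation among the `w_ℓ`. Finally, in a compact group the closure of a submonoid is a subgroup, so
the ray has the same closure as the line.
-/

open Set Filter Topology Submodule Real

section ClosedSubgroup

def AddSubgroup.submoduleCore (R : Type*) {M : Type*} [Ring R] [AddCommGroup M] [Module R M]
    (S : AddSubgroup M) : Submodule R M where
  carrier := {x | ∀ r : R, r • x ∈ S}
  add_mem' ha hb r := by simpa only [smul_add] using S.add_mem (ha r) (hb r)
  zero_mem' r := by simpa only [smul_zero] using S.zero_mem
  smul_mem' c x hx r := by simpa only [smul_smul] using hx (r * c)

theorem AddSubgroup.submoduleCore_subset {R M : Type*} [Ring R] [AddCommGroup M] [Module R M]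
    (S : AddSubgroup M) : (S.submoduleCore R : Set M) ⊆ S :=
  fun x hx => by simpa using hx 1

theorem exists_zsmul_norm_sub_smul_le {E : Type*} [NormedAddCommGroup E] [NormedSpace ℝ E]
    (s : E) (t : ℝ) : ∃ m : ℤ, ‖m • s - t • ‖s‖⁻¹ • s‖ ≤ ‖s‖ / 2 := by
  refine ⟨round (t * ‖s‖⁻¹), ?_⟩
  rw [← Int.cast_smul_eq_zsmul ℝ, smul_smul, ← sub_smul, norm_smul, Real.norm_eq_abs, abs_sub_comm]
  calc |t * ‖s‖⁻¹ - round (t * ‖s‖⁻¹)| * ‖s‖ ≤ 1 / 2 * ‖s‖ := by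
        gcongr; exact abs_sub_round _
    _ = ‖s‖ / 2 := by ring

variable {E : Type*} [NormedAddCommGroup E] [NormedSpace ℝ E] [FiniteDimensional ℝ E]

theorem AddSubgroup.discreteTopology_of_forall_smul_mem (S : AddSubgroup E)
    (hS : IsClosed (S : Set E)) (hline : ∀ x, (∀ t : ℝ, t • x ∈ S) → x = 0) :
    DiscreteTopology S := by
  rw [discreteTopology_iff_isOpen_singleton_zero, Metric.isOpen_singleton_iff]
  by_contra! hacc
  choose s hsε hs0 using fun n : ℕ => hacc (1 / (n + 1)) Nat.one_div_pos_of_nat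
  have hlim : Tendsto (fun n => (s n : E)) atTop (𝓝 0) :=
    squeeze_zero_norm (fun n => by simpa using (hsε n).le) tendsto_one_div_add_atTop_nhds_zero_nat
  have hsphere (n : ℕ) : ‖(s n : E)‖⁻¹ • (s n : E) ∈ Metric.sphere (0 : E) 1 := by
    rw [mem_sphere_zero_iff_norm, norm_smul, norm_inv, norm_norm, inv_mul_cancel₀]
    simpa using hs0 n
  obtain ⟨u, hu, φ, hφ, hφu⟩ := (isCompact_sphere (0 : E) 1).tendsto_subseq hsphere
  -- `t • u` is approximated by integer multiples of the ever shorter vectors `s (φ n)`.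
  suffices h : ∀ t : ℝ, t • u ∈ S by simp [hline u h] at hu
  intro t
  choose m hm using fun n => exists_zsmul_norm_sub_smul_le (s (φ n) : E) t
  have hclose : Tendsto (fun n => m n • (s (φ n) : E) - t • ‖(s (φ n) : E)‖⁻¹ • (s (φ n) : E))
      atTop (𝓝 0) :=
    squeeze_zero_norm hm (by simpa using (hlim.comp hφ.tendsto_atTop).norm.div_const 2)
  have hmem : Tendsto (fun n => m n • (s (φ n) : E)) atTop (𝓝 (t • u)) := by
    simpa using hclose.add (hφu.const_smul t)
  exact hS.mem_of_tendsto hmem (Eventually.of_forall fun n => S.zsmul_mem (s (φ n)).2 _)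

theorem AddSubgroup.exists_int_functional_of_discreteTopology [Nontrivial E] (L : AddSubgroup E)
    [DiscreteTopology L] (hL : span ℝ (L : Set E) = ⊤) :
    ∃ ψ : E →ₗ[ℝ] ℝ, ψ ≠ 0 ∧ ∀ x ∈ L, ∃ n : ℤ, ψ x = n := by
  let L' := L.toIntSubmodule
  have : DiscreteTopology L' := ‹DiscreteTopology L›
  have : IsZLattice ℝ L' := ⟨hL⟩
  have := ZLattice.module_free ℝ L'
  let b := Module.Free.chooseBasis ℤ L'
  obtain ⟨i⟩ := (b.ofZLatticeBasis ℝ L').index_nonempty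
  refine ⟨(b.ofZLatticeBasis ℝ L').coord i, fun h => ?_, fun x hx => ⟨b.repr ⟨x, hx⟩ i, ?_⟩⟩
  · simpa using LinearMap.congr_fun h (b.ofZLatticeBasis ℝ L' i)
  · simpa using b.ofZLatticeBasis_repr_apply ℝ L' ⟨x, hx⟩ i

theorem AddSubgroup.exists_int_functional_of_isClosed (S : AddSubgroup E)
    (hS : IsClosed (S : Set E)) (hspan : span ℝ (S : Set E) = ⊤) (hne : (S : Set E) ≠ univ) :
    ∃ φ : E →ₗ[ℝ] ℝ, φ ≠ 0 ∧ ∀ x ∈ S, ∃ n : ℤ, φ x = n := by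
  set V := S.submoduleCore ℝ
  have hVS : (V : Set E) ⊆ S := S.submoduleCore_subset
  have : IsClosed (V : Set E) := V.closed_of_finiteDimensional
  have : Nontrivial (E ⧸ V) := by
    refine Submodule.Quotient.nontrivial_iff.2 fun hV => hne (eq_univ_of_forall fun x => hVS ?_)
    simp [hV]
  set L := S.map V.mkQ.toAddMonoidHom
  have hpre : V.mkQ ⁻¹' L = S := by
    ext x
    refine ⟨?_, fun hx => ⟨x, hx, rfl⟩⟩
    rintro ⟨s, hs, hsx⟩
    have hsub : x - s ∈ V := (Submodule.Quotient.eq V).1 hsx.symm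
    simpa using S.add_mem (hVS hsub) hs
  have hLclosed : IsClosed (L : Set (E ⧸ V)) := by
    rw [← V.isQuotientMap_mkQ.isClosed_preimage, hpre]
    exact hS
  have hLline : ∀ y, (∀ t : ℝ, t • y ∈ L) → y = 0 := by
    intro y hy
    obtain ⟨x, rfl⟩ := V.mkQ_surjective y
    refine (Submodule.Quotient.mk_eq_zero V).2 fun t => ?_
    rw [← SetLike.mem_coe, ← hpre]
    simpa using hy t
  have : DiscreteTopology L := L.discreteTopology_of_forall_smul_mem hLclosed hLline
  have hLspan : span ℝ (L : Set (E ⧸ V)) = ⊤ := by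
    rw [AddSubgroup.coe_map, LinearMap.toAddMonoidHom_coe, Submodule.span_image, hspan,
      Submodule.map_top, Submodule.range_mkQ]
  obtain ⟨ψ, hψ, hψL⟩ := L.exists_int_functional_of_discreteTopology hLspan
  refine ⟨ψ ∘ₗ V.mkQ, fun h => hψ ?_, fun x hx => hψL _ ⟨x, hx, rfl⟩⟩
  exact (LinearMap.cancel_right V.mkQ_surjective).1 (by simpa using h)

end ClosedSubgroup

section OrderedGroup

variable {R : Type*} [AddCommGroup R] [LinearOrder R] [IsOrderedAddMonoid R]

theorem AddSubgroup.closure_Ici_zero_eq_top : AddSubgroup.closure (Ici (0 : R)) = ⊤ := by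
  refine eq_top_iff.2 fun x _ => ?_
  rcases le_total 0 x with hx | hx
  · exact AddSubgroup.subset_closure hx
  · have hx' : -x ∈ Ici (0 : R) := neg_nonneg.2 hx
    simpa using neg_mem (AddSubgroup.subset_closure hx')

theorem closure_image_Ici_eq_closure_range {G : Type*} [AddGroup G] [TopologicalSpace G]
    [CompactSpace G] [IsTopologicalAddGroup G] (φ : R →+ G) :
    closure (φ '' Ici 0) = closure (range φ) := by
  have hmonoid : φ '' Ici 0 = ((AddSubmonoid.nonneg R).map φ : Set G) := by
    rw [AddSubmonoid.coe_map, AddSubmonoid.coe_nonneg]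
  have hgroup : AddSubgroup.closure (φ '' Ici 0) = φ.range := by
    rw [← AddMonoidHom.map_closure, AddSubgroup.closure_Ici_zero_eq_top,
      ← AddMonoidHom.range_eq_map]
  calc closure (φ '' Ici 0) = closure (AddSubmonoid.closure (φ '' Ici 0) : Set G) := by
        rw [hmonoid, AddSubmonoid.closure_eq]
    _ = closure (AddSubgroup.closure (φ '' Ici 0) : Set G) :=
        closure_addSubmonoidClosure_eq_closure_addSubgroupClosure _
    _ = closure (range φ) := by rw [hgroup, AddMonoidHom.coe_range]

end OrderedGroup

namespace UnitAddTorus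

variable {ι : Type*}

variable (ι) in
def coeHom : (ι → ℝ) →+ UnitAddTorus ι :=
  (QuotientAddGroup.mk' (AddSubgroup.zmultiples (1 : ℝ))).compLeft ι

@[simp]
theorem coeHom_apply (x : ι → ℝ) (i : ι) : coeHom ι x i = x i := rfl

theorem continuous_coeHom : Continuous (coeHom ι) :=
  continuous_pi fun i => (AddCircle.continuous_mk' 1).comp (continuous_apply i)

theorem coeHom_surjective : Function.Surjective (coeHom ι) :=
  Function.Surjective.piMap fun _ => QuotientAddGroup.mk_surjective

def linearFlow (w : ι → ℝ) : ℝ →+ UnitAddTorus ι :=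
  (coeHom ι).comp (LinearMap.toSpanSingleton ℝ (ι → ℝ) w).toAddMonoidHom

@[simp]
theorem linearFlow_apply (w : ι → ℝ) (t : ℝ) : linearFlow w t = coeHom ι (t • w) := rfl

variable [Fintype ι]

theorem denseRange_linearFlow {w : ι → ℝ} (hw : LinearIndependent ℚ w) :
    DenseRange (linearFlow w) := by
  classical
  set S := (linearFlow w).range.topologicalClosure.comap (coeHom ι)
  have hSclosed : IsClosed (S : Set (ι → ℝ)) :=
    (AddSubgroup.isClosed_topologicalClosure _).preimage continuous_coeHom
  have hflow (t : ℝ) : t • w ∈ S := AddSubgroup.le_topologicalClosure _ ⟨t, rfl⟩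
  have hsingle (i : ι) : Pi.single i 1 ∈ S := by
    suffices coeHom ι (Pi.single i 1) = 0 by simp [S, this]
    ext j
    rcases eq_or_ne j i with rfl | hj <;> simp [*]
  by_contra hdense
  have hSne : (S : Set (ι → ℝ)) ≠ univ := by
    refine fun hS => hdense (dense_iff_closure_eq.2 (eq_univ_of_forall fun x => ?_))
    obtain ⟨y, rfl⟩ := coeHom_surjective x
    exact show y ∈ S by rw [← SetLike.mem_coe, hS]; trivial
  have hspan : span ℝ (S : Set (ι → ℝ)) = ⊤ := by
    rw [eq_top_iff, ← (Pi.basisFun ℝ ι).span_eq]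
    exact span_mono (range_subset_iff.2 fun i => by simpa using hsingle i)
  obtain ⟨φ, hφ, hφS⟩ := S.exists_int_functional_of_isClosed hSclosed hspan hSne
  have hφw : φ w = 0 := by
    by_contra hw0
    obtain ⟨n, hn⟩ := hφS _ (hflow (2 * φ w)⁻¹)
    have half : φ ((2 * φ w)⁻¹ • w) = 1 / 2 := by rw [map_smul, smul_eq_mul]; field_simp
    have h2n : (1 : ℝ) = 2 * n := by linarith
    have : (1 : ℤ) = 2 * n := by exact_mod_cast h2n
    omega
  choose c hc using fun i => hφS _ (hsingle i)
  have hrel : ∑ i, (c i : ℚ) • w i = 0 := by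
    rw [← hφw]
    conv_rhs => rw [← Finset.univ_sum_single w]
    rw [map_sum]
    refine Finset.sum_congr rfl fun i _ => ?_
    rw [show Pi.single i (w i) = w i • Pi.single i (1 : ℝ) by simp [← Pi.single_smul'], map_smul,
      hc]
    simp [Rat.smul_def, mul_comm]
  have hc0 (i : ι) : c i = 0 := by exact_mod_cast Fintype.linearIndependent_iff.1 hw _ hrel i
  exact hφ ((Pi.basisFun ℝ ι).ext fun i => by simp [hc, hc0])

theorem dense_linearFlow_image_Ici {w : ι → ℝ} (hw : LinearIndependent ℚ w) :
    Dense (linearFlow w '' Ici 0) := by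
  rw [dense_iff_closure_eq, closure_image_Ici_eq_closure_range]
  exact (denseRange_linearFlow hw).closure_range

theorem mFourier_coeHom (n : ι → ℤ) (z : ι → ℝ) :
    mFourier n (coeHom ι z) = Complex.exp (2 * π * Complex.I * ∑ i, (n i * z i : ℝ)) := by
  simp only [mFourier, ContinuousMap.coe_mk, coeHom_apply, fourier_coe_apply]
  rw [Complex.ofReal_sum, Finset.mul_sum, Complex.exp_sum]
  refine Finset.prod_congr rfl fun i _ => ?_
  push_cast
  ring_nf

theorem mFourier_coeHom_inv_two_pi_smul (n : ι → ℤ) (z : ι → ℝ) :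
    mFourier n (coeHom ι ((2 * π)⁻¹ • z)) = Complex.exp (Complex.I * ∑ i, (n i * z i : ℝ)) := by
  rw [mFourier_coeHom]
  congr 1
  simp only [Pi.smul_apply, smul_eq_mul, mul_left_comm _ (2 * π)⁻¹, ← Finset.mul_sum]
  push_cast
  field_simp

section mFourierFamily

variable {κ : Type*}

noncomputable def mFourierFamily (f : κ → ι → ℤ) (x : UnitAddTorus ι) : κ → ℂ :=
  fun r => mFourier (f r) x

theorem continuous_mFourierFamily (f : κ → ι → ℤ) : Continuous (mFourierFamily f) :=
  continuous_pi fun r => (mFourier (f r)).continuous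

theorem range_mFourierFamily (f : κ → ι → ℤ) :
    range (mFourierFamily f) = {u | ∃ z : ι → ℝ,
      u = fun r => Complex.exp (Complex.I * ((∑ ℓ, (f r ℓ : ℝ) * z ℓ : ℝ) : ℂ))} := by
  ext u
  constructor
  · rintro ⟨x, rfl⟩
    obtain ⟨y, rfl⟩ := coeHom_surjective x
    refine ⟨(2 * π) • y, funext fun r => ?_⟩
    show mFourier (f r) (coeHom ι y) = _
    rw [← mFourier_coeHom_inv_two_pi_smul, smul_smul, inv_mul_cancel₀ (by positivity), one_smul]
  · rintro ⟨z, rfl⟩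
    exact ⟨_, funext fun r => mFourier_coeHom_inv_two_pi_smul (f r) z⟩

theorem mFourierFamily_image_linearFlow_Ici (f : κ → ι → ℤ) (w : ι → ℝ) (θ : κ → ℝ)
    (hθ : ∀ r, θ r = ∑ ℓ, (f r ℓ : ℝ) * w ℓ) :
    mFourierFamily f '' (linearFlow w '' Ici 0) =
      {u | ∃ t : ℝ, 0 ≤ t ∧ u = fun r => Complex.exp (Complex.I * (t : ℂ) * (θ r : ℂ))} := by
  have hcurve (t : ℝ) : mFourierFamily f (linearFlow w ((2 * π)⁻¹ * t)) =
      fun r => Complex.exp (Complex.I * (t : ℂ) * (θ r : ℂ)) := by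
    ext r
    simp only [mFourierFamily, linearFlow_apply, mul_smul, mFourier_coeHom_inv_two_pi_smul, hθ,
      Pi.smul_apply, smul_eq_mul, mul_left_comm _ t, ← Finset.mul_sum]
    push_cast
    ring_nf
  ext u
  constructor
  · rintro ⟨_, ⟨s, hs, rfl⟩, rfl⟩
    refine ⟨2 * π * s, mul_nonneg (by positivity) hs, ?_⟩
    rw [← hcurve, ← mul_assoc, inv_mul_cancel₀ (by positivity), one_mul]
  · rintro ⟨t, ht, rfl⟩
    exact ⟨_, ⟨_, mul_nonneg (by positivity) ht, rfl⟩, hcurve t⟩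

end mFourierFamily

end UnitAddTorus

open UnitAddTorus in
/-- For rationally independent reals `w_1,…,w_k` and integer vectors
`f^0,…,f^d` with `θ_r = ⟨f^r, w⟩`, the closure of the curve
`{(e^{itθ_0},…,e^{itθ_d}) : t ≥ 0}` in the torus `(S¹)^{d+1} ⊆ ℂ^{d+1}` equals
`{(e^{i⟨f^0,z⟩},…,e^{i⟨f^d,z⟩}) : z ∈ ℝ^k}`. -/
theorem closure_frequency_curve_eq_torus_image
    {k d : ℕ} (w : Fin k → ℝ) (hw : LinearIndependent ℚ w)
    (f : Fin (d + 1) → Fin k → ℤ)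
    (θ : Fin (d + 1) → ℝ) (hθ : ∀ r, θ r = ∑ ℓ, (f r ℓ : ℝ) * w ℓ) :
    closure {u : Fin (d + 1) → ℂ | ∃ t : ℝ, 0 ≤ t ∧
        u = fun r => Complex.exp (Complex.I * (t : ℂ) * (θ r : ℂ))} =
      {u : Fin (d + 1) → ℂ | ∃ z : Fin k → ℝ,
        u = fun r => Complex.exp (Complex.I * ((∑ ℓ, (f r ℓ : ℝ) * z ℓ : ℝ) : ℂ))} := by
  have hcont := continuous_mFourierFamily f
  rw [← mFourierFamily_image_linearFlow_Ici f w θ hθ, ← range_mFourierFamily,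
    hcont.isClosedMap.closure_image_eq_of_continuous hcont,
    (dense_linearFlow_image_Ici hw).closure_eq, image_univ]
end

section
/- Let A be a real symmetric n×n matrix, let a ≠ b be indices, and write φ(x) = det(xI − A), φ_a(x) = det(xI_{n−1} − A∖a) where A∖a is the principal submatrix of A obtained by deleting row and column a (similarly φ_b and φ_{ab}, the latter deleting both rows and columns a and b). Then the polynomial φ_a(x)·φ_b(x) − φ(x)·φ_{ab}(x) is the square of a polynomial; specifically, it equals (adj(xI − A)_{ab})², the square of the (a,b) entry of the adjugate matrix of xI − A. -/
open Matrix Polynomial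

variable {α : Type*} [CommRing α] {n : Type*} [Fintype n] [DecidableEq n]

/-- Equiv splitting off one index. -/
def eOne (a : n) : {i : n // i ≠ a} ⊕ Unit ≃ n where
  toFun := Sum.elim Subtype.val fun _ => a
  invFun i := if h : i = a then Sum.inr () else Sum.inl ⟨i, h⟩
  left_inv := by
    rintro (⟨i, hi⟩ | u)
    · simp [hi]
    · simp
  right_inv i := by by_cases h : i = a <;> simp [h]

/-- Equiv splitting off two indices. -/
def eTwo (a b : n) (hab : a ≠ b) : {i : n // i ≠ a ∧ i ≠ b} ⊕ Fin 2 ≃ n where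
  toFun := Sum.elim Subtype.val fun k => if k = 0 then a else b
  invFun i := if h : i = a then Sum.inr 0 else if h' : i = b then Sum.inr 1 else Sum.inl ⟨i, h, h'⟩
  left_inv := by
    rintro (⟨i, hi, hi'⟩ | k)
    · simp [hi, hi']
    · fin_cases k <;> simp [hab, hab.symm]
  right_inv i := by
    by_cases h : i = a
    · simp [h]
    · by_cases h' : i = b <;> simp [h, h', hab.symm]

lemma adjugate_diag (M : Matrix n n α) (a : n) :
    M.adjugate a a =
      (M.submatrix (fun i : {i : n // i ≠ a} => (i : n))
        (fun i : {i : n // i ≠ a} => (i : n))).det := by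
  rw [adjugate_apply, ← det_submatrix_equiv_self (eOne a)]
  have h : (M.updateRow a (Pi.single a 1)).submatrix (eOne a) (eOne a) =
      fromBlocks
        (M.submatrix (fun i : {i : n // i ≠ a} => (i : n)) (fun i : {i : n // i ≠ a} => (i : n)))
        (Matrix.of fun i _ => M (i : n) a) 0 1 := by
    ext (i | u) (j | v)
    · simp [eOne, updateRow_apply, i.2]
    · simp [eOne, updateRow_apply, i.2]
    · simp [eOne, updateRow_apply, Pi.single_apply, (j.2).symm]
    · simp [eOne, updateRow_apply, Pi.single_apply, Matrix.one_apply]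
  rw [h, det_fromBlocks_zero₂₁, det_one, mul_one]

lemma jacobi (M : Matrix n n α) [IsDomain α] (hM : M.det ≠ 0) (a b : n) (hab : a ≠ b) :
    M.adjugate a a * M.adjugate b b - M.adjugate a b * M.adjugate b a =
      M.det * (M.submatrix (fun i : {i : n // i ≠ a ∧ i ≠ b} => (i : n))
        (fun i : {i : n // i ≠ a ∧ i ≠ b} => (i : n))).det := by
  set P := M.submatrix (fun i : {i : n // i ≠ a ∧ i ≠ b} => (i : n))
      (fun i : {i : n // i ≠ a ∧ i ≠ b} => (i : n)) with hP
  set C : Matrix n n α := Matrix.of fun i j =>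
    if j = a then M.adjugate i a else if j = b then M.adjugate i b else
      if i = j then 1 else 0 with hCdef
  set D : Matrix n n α := Matrix.of fun i j =>
    if j = a then (if i = a then M.det else 0)
    else if j = b then (if i = b then M.det else 0) else M i j with hDdef
  have hadj : ∀ i j, (M * M.adjugate) i j = if i = j then M.det else 0 := by
    intro i j
    rw [mul_adjugate]
    simp [Matrix.one_apply]
  have hMC : M * C = D := by
    ext i j
    by_cases hja : j = a
    · subst hja
      have : (M * C) i j = (M * M.adjugate) i j := by
        simp [mul_apply, hCdef]
      rw [this, hadj]
      simp [hDdef]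
    · by_cases hjb : j = b
      · subst hjb
        have : (M * C) i j = (M * M.adjugate) i j := by
          simp [mul_apply, hCdef, hja]
        rw [this, hadj]
        simp [hDdef, hja]
      · have : (M * C) i j = M i j := by
          simp [mul_apply, hCdef, hja, hjb, mul_ite]
        rw [this]
        simp [hDdef, hja, hjb]
  have hC : C.det = M.adjugate a a * M.adjugate b b - M.adjugate a b * M.adjugate b a := by
    rw [← det_submatrix_equiv_self (eTwo a b hab)]
    have h : C.submatrix (eTwo a b hab) (eTwo a b hab) =
        fromBlocks 1 (Matrix.of fun (i : {i : n // i ≠ a ∧ i ≠ b}) (k : Fin 2) => M.adjugate (i : n) (if k = 0 then a else b)) 0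
          !![M.adjugate a a, M.adjugate a b; M.adjugate b a, M.adjugate b b] := by
      ext (i | k) (j | l)
      · have : (i : n) = (j : n) ↔ i = j := Subtype.val_inj
        simp [eTwo, hCdef, j.2.1, j.2.2, Matrix.one_apply, this]
      · fin_cases l <;> simp [eTwo, hCdef, hab, hab.symm]
      · fin_cases k <;> simp [eTwo, hCdef, j.2.1, j.2.2, (j.2.1).symm, (j.2.2).symm, hab, hab.symm]
      · fin_cases k <;> fin_cases l <;> simp [eTwo, hCdef, hab, hab.symm]
    rw [h, det_fromBlocks_zero₂₁, det_one, one_mul, det_fin_two_of]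
  have hD : D.det = P.det * M.det ^ 2 := by
    rw [← det_submatrix_equiv_self (eTwo a b hab)]
    have h : D.submatrix (eTwo a b hab) (eTwo a b hab) =
        fromBlocks P 0
          (Matrix.of fun (k : Fin 2) (j : {i : n // i ≠ a ∧ i ≠ b}) => M (if k = 0 then a else b) (j : n))
          !![M.det, 0; 0, M.det] := by
      ext (i | k) (j | l)
      · simp [eTwo, hDdef, j.2.1, j.2.2, hP]
      · fin_cases l <;> simp [eTwo, hDdef, i.2.1, i.2.2, hab, hab.symm]
      · fin_cases k <;> simp [eTwo, hDdef, j.2.1, j.2.2, (j.2.1).symm, (j.2.2).symm, hab, hab.symm]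
      · fin_cases k <;> fin_cases l <;> simp [eTwo, hDdef, hab, hab.symm]
    rw [h, det_fromBlocks_zero₁₂, det_fin_two_of]
    ring
  have key : M.det * C.det = M.det * (M.det * P.det) := by
    rw [← det_mul, hMC, hD]; ring
  have := mul_left_cancel₀ hM key
  rw [← hC, this]

lemma charmatrix_submatrix_inj {m : Type*} [Fintype m] [DecidableEq m]
    (A : Matrix n n α) (f : m → n) (hf : Function.Injective f) :
    charmatrix (A.submatrix f f) = (charmatrix A).submatrix f f := by
  apply Matrix.ext; intro i j
  by_cases h : i = j
  · subst h; simp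
  · simp only [Matrix.submatrix_apply, charmatrix_apply_ne _ _ _ h,
      charmatrix_apply_ne _ _ _ (fun hc => h (hf hc))]

/-- For a real symmetric `n×n` matrix `A` and indices `a ≠ b`, with
`φ = det(xI − A)`, `φ_a`, `φ_b`, `φ_{ab}` the characteristic polynomials of the principal
submatrices deleting `a`, `b`, and both, the polynomial `φ_a·φ_b − φ·φ_{ab}` is a square:
it equals `(adj(xI − A)_{ab})²`. -/
theorem charpoly_minor_identity_is_square
    {n : ℕ} (A : Matrix (Fin n) (Fin n) ℝ) (hAsym : Aᵀ = A)
    (a b : Fin n) (hab : a ≠ b) :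
    (A.submatrix (fun i : {i : Fin n // i ≠ a} => (i : Fin n))
        (fun i : {i : Fin n // i ≠ a} => (i : Fin n))).charpoly *
      (A.submatrix (fun i : {i : Fin n // i ≠ b} => (i : Fin n))
        (fun i : {i : Fin n // i ≠ b} => (i : Fin n))).charpoly -
      A.charpoly *
        (A.submatrix (fun i : {i : Fin n // i ≠ a ∧ i ≠ b} => (i : Fin n))
          (fun i : {i : Fin n // i ≠ a ∧ i ≠ b} => (i : Fin n))).charpoly =
      ((Matrix.charmatrix A).adjugate a b) ^ 2 := by
  set M := charmatrix A with hM
  have hMsym : Mᵀ = M := by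
    ext i j
    by_cases h : i = j
    · subst h; rfl
    · have hA : A j i = A i j := congrFun (congrFun hAsym i) j
      rw [Matrix.transpose_apply, hM, charmatrix_apply_ne _ _ _ (Ne.symm h),
        charmatrix_apply_ne _ _ _ h, hA]
  have hadjsym : M.adjugate b a = M.adjugate a b := by
    have := adjugate_transpose M
    rw [hMsym] at this
    calc M.adjugate b a = (M.adjugate)ᵀ a b := rfl
      _ = M.adjugate a b := by rw [this]
  have hdet : M.det ≠ 0 := by
    have : M.det = A.charpoly := rfl
    rw [this]
    exact A.charpoly_monic.ne_zero
  have hcp : ∀ (c : Fin n), (A.submatrix (fun i : {i : Fin n // i ≠ c} => (i : Fin n))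
      (fun i : {i : Fin n // i ≠ c} => (i : Fin n))).charpoly = M.adjugate c c := by
    intro c
    rw [Matrix.charpoly, charmatrix_submatrix_inj _ _ Subtype.val_injective,
      adjugate_diag]
  have hcp2 : (A.submatrix (fun i : {i : Fin n // i ≠ a ∧ i ≠ b} => (i : Fin n))
      (fun i : {i : Fin n // i ≠ a ∧ i ≠ b} => (i : Fin n))).charpoly =
      (M.submatrix (fun i : {i : Fin n // i ≠ a ∧ i ≠ b} => (i : Fin n))
        (fun i : {i : Fin n // i ≠ a ∧ i ≠ b} => (i : Fin n))).det := by
    rw [Matrix.charpoly, charmatrix_submatrix_inj _ _ Subtype.val_injective]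
  have hchar : A.charpoly = M.det := rfl
  rw [hcp a, hcp b, hcp2, hchar, ← jacobi M hdet a b hab, hadjsym]
  ring
end
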